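/- arXiv:1911.03412 — 9 statements merged into one kernel-verified Lean document; each statement's English description precedes it below -/
import Mathlib

section
/- Let L/K be an unramified extension of non-archimedean local fields of degree n, and let s be an integer. A smooth character θ of L^× satisfies θ ∘ σ^s = θ (where σ is the Frobenius of L/K) if and only if θ factors through the norm map N_{L/K_g} where K_g is the intermediate field of degree g = gcd(n,s) over K. -/
/-!
Put `g = gcd(n, s)` and `F = L^⟨σ^g⟩`. Since `σ^n = 1`, the elements `σ^s` and `σ^g` generate the
same subgroup of `Gal(L/K)`, so `θ` is `σ^s`-invariant iff it is `σ^g`-invariant. The group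
`Gal(L/F)` is cyclic, generated by `σ^g`, so by Hilbert 90 the kernel of `N_{L/F}` on `L^×`
consists of the quotients `σ^g(β)/β`; hence `σ^g`-invariance of `θ` means `ker N_{L/F} ≤ ker θ`.
Finally `ℂ^×` is divisible, hence an injective `ℤ`-module, so the character that `θ` induces on
the image of `N_{L/F}` extends to all of `F^×`.
-/

open Finset Subgroup groupCohomology IntermediateField

theorem IsAlgClosed.units_pow_surjective (k : Type*) [Field k] [IsAlgClosed k] {n : ℕ}
    (hn : n ≠ 0) : Function.Surjective fun u : kˣ => u ^ n := fun u => by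
  obtain ⟨z, hz⟩ := IsAlgClosed.exists_pow_nat_eq (u : k) (Nat.pos_of_ne_zero hn)
  have hz0 : z ≠ 0 := by rintro rfl; exact u.ne_zero (by rw [← hz, zero_pow hn])
  exact ⟨Units.mk0 z hz0, Units.ext (by simpa using hz)⟩

noncomputable instance IsAlgClosed.unitsRootableBy (k : Type*) [Field k] [IsAlgClosed k] :
    RootableBy kˣ ℕ :=
  rootableByOfPowLeftSurj _ _ (IsAlgClosed.units_pow_surjective k)

section Extension

variable {G H Q : Type*} [CommGroup G] [CommGroup H] [CommGroup Q] [RootableBy Q ℕ]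

theorem MonoidHom.exists_comp_eq_of_injective {f : G →* H} (hf : Function.Injective f)
    (χ : G →* Q) : ∃ χ' : H →* Q, χ'.comp f = χ := by
  let : DivisibleBy (Additive Q) ℤ := @AddGroup.divisibleByIntOfDivisibleByNat _ _ <|
    divisibleByOfSMulRightSurj _ _ fun hn a =>
      ⟨.ofMul (RootableBy.root a.toMul _), congrArg Additive.ofMul (RootableBy.root_cancel _ hn)⟩
  obtain ⟨χ', hχ'⟩ := (Module.Baer.of_divisible (Additive Q)).extension_property_addMonoidHom
    f.toAdditive hf χ.toAdditive
  exact ⟨MonoidHom.toAdditive.symm χ', MonoidHom.toAdditive.injective hχ'⟩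

theorem MonoidHom.exists_comp_eq_iff_ker_le (f : G →* H) (θ : G →* Q) :
    (∃ χ : H →* Q, θ = χ.comp f) ↔ f.ker ≤ θ.ker := by
  constructor
  · rintro ⟨χ, rfl⟩ x hx
    simp_all [MonoidHom.mem_ker]
  · intro h
    obtain ⟨χ, hχ⟩ := MonoidHom.exists_comp_eq_of_injective f.range.subtype_injective
      ((QuotientGroup.lift f.ker θ h).comp
        (QuotientGroup.quotientKerEquivRange f).symm.toMonoidHom)
    refine ⟨χ, MonoidHom.ext fun x => ?_⟩
    have hmk : (QuotientGroup.quotientKerEquivRange f).symm (f.rangeRestrict x) = x :=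
      (MulEquiv.symm_apply_eq _).mpr rfl
    simpa [hmk] using (DFunLike.congr_fun hχ (f.rangeRestrict x)).symm

end Extension

theorem prod_range_orderOf_pow_eq_prod_univ {G M : Type*} [Group G] [Fintype G] [CommMonoid M]
    {τ : G} (hτ : ∀ g, g ∈ zpowers τ) (f : G → M) :
    ∏ i ∈ range (orderOf τ), f (τ ^ i) = ∏ g, f g := by
  classical
  rw [← IsCyclic.image_range_orderOf hτ, prod_image]
  intro i hi j hj hij
  exact pow_injOn_Iio_orderOf (by simpa using hi) (by simpa using hj) hij

section PartialNorm

variable {G M : Type*}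

section Monoid

variable [Monoid G] [CommMonoid M] [MulDistribMulAction G M]

/-- `k ↦ u · τu ⋯ τ^(k-1)u` descends to a 1-cocycle on `⟨τ⟩` as soon as the full norm
`partialNorm τ u (orderOf τ)` is `1`; this reduces cyclic Hilbert 90 to Noether's form. -/
def partialNorm (τ : G) (u : M) (k : ℕ) : M := ∏ i ∈ range k, (τ ^ i) • u

theorem partialNorm_one (τ : G) (u : M) : partialNorm τ u 1 = u := by
  simp [partialNorm]

theorem partialNorm_add (τ : G) (u : M) (a b : ℕ) :
    partialNorm τ u (a + b) = partialNorm τ u a * τ ^ a • partialNorm τ u b := by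
  simp only [partialNorm, prod_range_add, smul_prod', pow_add, mul_smul]

theorem partialNorm_periodic {τ : G} {u : M} {m : ℕ} (hτ : τ ^ m = 1)
    (hu : partialNorm τ u m = 1) : Function.Periodic (partialNorm τ u) m := fun k => by
  rw [add_comm, partialNorm_add, hu, hτ, one_smul, one_mul]

end Monoid

variable [Group G] [CommGroup M] [MulDistribMulAction G M]

theorem partialNorm_eq_of_pow_eq {τ : G} {u : M} (hu : partialNorm τ u (orderOf τ) = 1)
    {a b : ℕ} (h : τ ^ a = τ ^ b) : partialNorm τ u a = partialNorm τ u b := by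
  have hper := partialNorm_periodic (pow_orderOf_eq_one τ) hu
  rw [← hper.map_mod_nat a, ← hper.map_mod_nat b, pow_eq_pow_iff_modEq.mp h]

theorem exists_isMulCocycle₁_apply_eq [Finite G] {τ : G} (hτ : ∀ g, g ∈ zpowers τ) {u : M}
    (hu : partialNorm τ u (orderOf τ) = 1) : ∃ f : G → M, IsMulCocycle₁ f ∧ f τ = u := by
  have hpow (g : G) : ∃ k : ℕ, τ ^ k = g := mem_powers_iff_mem_zpowers.mpr (hτ g)
  let f (g : G) : M := partialNorm τ u (hpow g).choose
  have hf (k : ℕ) : f (τ ^ k) = partialNorm τ u k :=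
    partialNorm_eq_of_pow_eq hu (hpow _).choose_spec
  refine ⟨f, fun g h => ?_, by simpa [partialNorm_one] using hf 1⟩
  obtain ⟨a, rfl⟩ := hpow g
  obtain ⟨b, rfl⟩ := hpow h
  rw [← pow_add, hf, hf, hf, partialNorm_add, mul_comm]

end PartialNorm

/-- Cyclic Hilbert 90, derived here because `groupCohomology.exists_div_of_norm_eq_one` is
stated only for fields in `Type`. -/
theorem exists_smul_div_eq_of_norm_eq_one {F L : Type*} [Field F] [Field L] [Algebra F L]
    [FiniteDimensional F L] [IsGalois F L] {τ : L ≃ₐ[F] L} (hτ : ∀ g, g ∈ zpowers τ) {u : Lˣ}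
    (hu : Algebra.norm F (u : L) = 1) : ∃ β : Lˣ, τ • β / β = u := by
  have hN : partialNorm τ u (orderOf τ) = 1 := Units.ext <|
    calc ((partialNorm τ u (orderOf τ) : Lˣ) : L)
        = ∏ i ∈ range (orderOf τ), (τ ^ i) (u : L) := by simp [partialNorm]
      _ = ∏ g : L ≃ₐ[F] L, g u := prod_range_orderOf_pow_eq_prod_univ hτ (fun g => g (u : L))
      _ = 1 := by rw [← Algebra.norm_eq_prod_automorphisms, hu, map_one]
  obtain ⟨f, hf, hfτ⟩ := exists_isMulCocycle₁_apply_eq hτ hN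
  obtain ⟨β, hβ⟩ := isMulCoboundary₁_of_isMulCocycle₁_of_aut_to_units f hf
  exact ⟨β, (hβ τ).trans hfτ⟩

theorem ker_norm_le_ker_iff {F L Q : Type*} [Field F] [Field L] [Algebra F L]
    [FiniteDimensional F L] [IsGalois F L] [Group Q] {τ : L ≃ₐ[F] L}
    (hτ : ∀ g, g ∈ zpowers τ) (θ : Lˣ →* Q) :
    (Units.map (Algebra.norm F : L →* F)).ker ≤ θ.ker ↔ ∀ x, θ (τ • x) = θ x := by
  constructor
  · intro h x
    have hx : τ • x / x ∈ (Units.map (Algebra.norm F : L →* F)).ker := by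
      rw [MonoidHom.mem_ker, map_div, div_eq_one]
      exact Units.ext (Algebra.norm_eq_of_algEquiv τ (x : L))
    simpa [div_eq_one] using h hx
  · intro h u hu
    obtain ⟨β, rfl⟩ := exists_smul_div_eq_of_norm_eq_one hτ (congrArg Units.val hu)
    rw [MonoidHom.mem_ker, map_div, h, div_self']

theorem IntermediateField.mem_zpowers_subgroupEquivAlgEquiv {F E : Type*} [Field F] [Field E]
    [Algebra F E] [FiniteDimensional F E] (τ : E ≃ₐ[F] E)
    (φ : E ≃ₐ[fixedField (zpowers τ)] E) :
    φ ∈ zpowers (subgroupEquivAlgEquiv (zpowers τ) ⟨τ, mem_zpowers τ⟩) := by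
  obtain ⟨k, hk⟩ := ((subgroupEquivAlgEquiv (zpowers τ)).symm φ).2
  refine ⟨k, ?_⟩
  simp only [← map_zpow]
  rw [← MulEquiv.eq_symm_apply]
  exact Subtype.ext (by simpa using hk)

theorem exists_comp_norm_fixedField_zpowers_iff {K L Q : Type*} [Field K] [Field L]
    [Algebra K L] [IsGalois K L] [FiniteDimensional K L] [CommGroup Q] [RootableBy Q ℕ]
    (τ : L ≃ₐ[K] L) (θ : Lˣ →* Q) :
    (∃ χ : (fixedField (zpowers τ))ˣ →* Q,
        θ = χ.comp (Units.map (Algebra.norm (fixedField (zpowers τ)) : L →* _))) ↔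
      ∀ x, θ (τ • x) = θ x := by
  rw [MonoidHom.exists_comp_eq_iff_ker_le,
    ker_norm_le_ker_iff (mem_zpowers_subgroupEquivAlgEquiv τ)]
  -- `subgroupEquivAlgEquiv` keeps the underlying map of `τ`
  rfl

theorem apply_smul_eq_of_mem_zpowers {G X Y : Type*} [Group G] [MulAction G X] {f : X → Y}
    {τ g : G} (hg : g ∈ zpowers τ) (h : ∀ x, f (τ • x) = f x) (x : X) : f (g • x) = f x := by
  obtain ⟨k, rfl⟩ := mem_zpowers_iff.mp hg
  clear hg
  induction k using Int.induction_on generalizing x with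
  | zero => simp
  | succ k ih => rw [zpow_add_one, mul_smul, ih, h]
  | pred k ih => rw [zpow_sub_one, mul_smul, ih, ← h, smul_inv_smul]

theorem zpow_gcd_mem_zpowers_zpow {G : Type*} [Group G] {x : G} {n : ℤ} (hx : x ^ n = 1)
    (s : ℤ) : x ^ (Int.gcd n s : ℤ) ∈ zpowers (x ^ s) :=
  ⟨Int.gcdB n s, by
    simp only [← zpow_mul, Int.gcd_eq_gcd_ab, zpow_add, zpow_mul x n, hx, one_zpow, one_mul]⟩

theorem zpow_mem_zpowers_zpow_gcd {G : Type*} [Group G] (x : G) (n s : ℤ) :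
    x ^ s ∈ zpowers (x ^ (Int.gcd n s : ℤ)) :=
  ⟨s / Int.gcd n s, by simp only [← zpow_mul, Int.mul_ediv_cancel' (Int.gcd_dvd_right n s)]⟩

theorem character_sigma_invariant_iff_factors_through_norm_general
    (K L : Type*) [Field K] [Field L] [Algebra K L] [IsGalois K L]
    [FiniteDimensional K L]
    (n : ℕ) (hn : Module.finrank K L = n)
    (σ : L ≃ₐ[K] L)
    (s : ℤ) (θ : Lˣ →* ℂˣ) :
    (∀ x : Lˣ, θ (Units.map ((σ ^ s : L ≃ₐ[K] L) : L →* L) x) = θ x) ↔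
      ∃ χ : (↥(IntermediateField.fixedField
              (Subgroup.zpowers (σ ^ (Int.gcd n s : ℤ)))))ˣ →* ℂˣ,
        θ = χ.comp (Units.map (Algebra.norm
              (↥(IntermediateField.fixedField
                  (Subgroup.zpowers (σ ^ (Int.gcd n s : ℤ))))) : L →* _)) := by
  have hσn : σ ^ (n : ℤ) = 1 := by
    rw [zpow_natCast, ← hn, ← IsGalois.card_aut_eq_finrank]
    exact pow_card_eq_one'
  rw [exists_comp_norm_fixedField_zpowers_iff]
  exact ⟨apply_smul_eq_of_mem_zpowers (zpow_gcd_mem_zpowers_zpow hσn s),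
    apply_smul_eq_of_mem_zpowers (zpow_mem_zpowers_zpow_gcd σ n s)⟩

/-- Let `L/K` be the unramified (hence cyclic Galois) extension of degree `n` of
non-archimedean local fields, with Galois group generated by the Frobenius `σ`, and
let `s` be an integer.  A character `θ` of `L^×` satisfies `θ ∘ σ^s = θ` if and only
if `θ` factors through the norm map `N_{L/K_g}` to the intermediate field
`K_g = L^{⟨σ^g⟩}` of degree `g = gcd(n,s)` over `K`. -/
theorem character_sigma_invariant_iff_factors_through_norm
    (K L : Type*) [Field K] [Field L] [Algebra K L] [IsGalois K L]
    [FiniteDimensional K L]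
    (n : ℕ) (hn : Module.finrank K L = n)
    (σ : L ≃ₐ[K] L) (hσ : ∀ g : L ≃ₐ[K] L, g ∈ Subgroup.zpowers σ)
    (s : ℤ) (θ : Lˣ →* ℂˣ) :
    (∀ x : Lˣ, θ (Units.map ((σ ^ s : L ≃ₐ[K] L) : L →* L) x) = θ x) ↔
      ∃ χ : (↥(IntermediateField.fixedField
              (Subgroup.zpowers (σ ^ (Int.gcd n s : ℤ)))))ˣ →* ℂˣ,
        θ = χ.comp (Units.map (Algebra.norm
              (↥(IntermediateField.fixedField
                  (Subgroup.zpowers (σ ^ (Int.gcd n s : ℤ))))) : L →* _)) :=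
  character_sigma_invariant_iff_factors_through_norm_general K L n hn σ s θ
end

section
/- Let f : X → Y be a morphism of perfect schemes over a perfect field k of characteristic p, with X separated. Then f is a monomorphism of fpqc sheaves on perfect k-algebras if and only if for every algebraically closed field extension K of k, the induced map X(K) → Y(K) is injective. -/
open AlgebraicGeometry CategoryTheory

/-- A scheme over `𝔽_p` is perfect iff its absolute Frobenius is an isomorphism,
equivalently iff all its stalks are perfect rings. -/
def IsPerfectScheme (p : ℕ) (X : Scheme) : Prop :=
  ∀ pt : ↥X, CharP ↥(X.presheaf.stalk pt) p ∧
    Function.Bijective (fun a : ↥(X.presheaf.stalk pt) => a ^ p)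

/-!
Algebraically closed fields are perfect, which gives one direction. Conversely, a perfect ring `R`
is reduced, and two morphisms from a reduced scheme to a separated one coincide as soon as they
agree on the residue fields; since `Spec κ̄ → Spec κ` is dominant for an algebraic closure `κ̄`
of a residue field `κ`, it suffices that they agree on geometric points. Every geometric point of
`Spec R` is a `k`-point for the induced `k`-structure on `κ̄`, so injectivity of `X(κ̄) → Y(κ̄)`
turns `g₁ ≫ f = g₂ ≫ f` into `g₁ = g₂`.
-/

open Limits

theorem IsReduced.of_injective_pow {R : Type*} [MonoidWithZero R] {n : ℕ} (hn : 1 < n)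
    (h : Function.Injective fun a : R => a ^ n) : IsReduced R :=
  (isReduced_iff_pow_one_lt n hn).2 fun _ hx => h (hx.trans (zero_pow (by omega)).symm)

namespace AlgebraicGeometry

theorem Scheme.ext_of_algClosed_points {T X : Scheme.{u}} [IsReduced T] [X.IsSeparated]
    {a b : T ⟶ X}
    (h : ∀ (K : Type u) [Field K] [IsAlgClosed K] (ι : Spec (CommRingCat.of K) ⟶ T),
      ι ≫ a = ι ≫ b) : a = b := by
  refine ext_of_fromSpecResidueField_eq a b (terminal.from X) Set.univ dense_univ
    (fun x _ => ?_) (terminal.hom_ext _ _)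
  let κ := T.residueField x
  let ι : Spec (CommRingCat.of (AlgebraicClosure κ)) ⟶ Spec κ :=
    Spec.map (CommRingCat.ofHom (algebraMap κ (AlgebraicClosure κ)))
  refine ext_of_isDominant_of_isSeparated (terminal.from X) (terminal.hom_ext _ _) ι ?_
  simpa only [Category.assoc] using h _ (ι ≫ T.fromSpecResidueField x)

theorem Spec.exists_algebra_and_overHom {k R S : Type u} [CommRing k] [CommRing R] [Algebra k R]
    [CommRing S] (ι : Spec (CommRingCat.of S) ⟶ Spec (CommRingCat.of R)) :
    ∃ (_ : Algebra k S) (j : Over.mk (Spec.map (CommRingCat.ofHom (algebraMap k S))) ⟶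
      Over.mk (Spec.map (CommRingCat.ofHom (algebraMap k R)))), j.left = ι := by
  obtain ⟨φ, rfl⟩ := Spec.map_surjective ι
  let : Algebra k S := (φ.hom.comp (algebraMap k R)).toAlgebra
  refine ⟨this, Over.homMk (Spec.map φ) ?_, rfl⟩
  simp only [Over.mk_hom, ← Spec.map_comp]
  rfl

end AlgebraicGeometry

theorem perfect_scheme_mono_iff_injective_on_alg_closed_points_general
    (p : ℕ) [Fact p.Prime] (k : Type) [Field k] [CharP k p]
    (X Y : Over (Spec (CommRingCat.of k)))
    [X.left.IsSeparated]
    (f : X ⟶ Y) :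
    (∀ (R : Type) [CommRing R] [Algebra k R] [CharP R p],
        Function.Bijective (fun a : R => a ^ p) →
        Function.Injective
          (fun g : Over.mk (Spec.map (CommRingCat.ofHom (algebraMap k R))) ⟶ X =>
            g ≫ f)) ↔
    (∀ (K : Type) [Field K] [Algebra k K] [IsAlgClosed K],
        Function.Injective
          (fun g : Over.mk (Spec.map (CommRingCat.ofHom (algebraMap k K))) ⟶ X =>
            g ≫ f)) := by
  constructor
  · intro h K _ _ _
    have : CharP K p := charP_of_injective_algebraMap (algebraMap k K).injective p
    exact h K (bijective_frobenius K p)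
  · intro h R _ _ _ hR g₁ g₂ (hfg : g₁ ≫ f = g₂ ≫ f)
    have : IsReduced R := .of_injective_pow (Fact.out : p.Prime).one_lt hR.1
    ext1
    refine Scheme.ext_of_algClosed_points (T := Spec (.of R)) fun K _ _ ι => ?_
    obtain ⟨_, j, rfl⟩ := Spec.exists_algebra_and_overHom (k := k) ι
    have hj : (j ≫ g₁) ≫ f = (j ≫ g₂) ≫ f := by simp only [Category.assoc, hfg]
    simpa only [Over.comp_left] using congr(($(h K hj)).left)

/-- Lemma 2.2 of the paper.  Let `f : X → Y` be a morphism of perfect schemes over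
a perfect field `k` of characteristic `p`, with `X` separated.  Then `f` is a
monomorphism of fpqc (equivalently étale) sheaves on perfect `k`-algebras — i.e.
`X(R) → Y(R)` is injective for every perfect `k`-algebra `R` — if and only if
`X(K) → Y(K)` is injective for every algebraically closed field extension `K/k`. -/
theorem perfect_scheme_mono_iff_injective_on_alg_closed_points
    (p : ℕ) [Fact p.Prime] (k : Type) [Field k] [CharP k p] [PerfectRing k p]
    (X Y : Over (Spec (CommRingCat.of k)))
    (hX : IsPerfectScheme p X.left) (hY : IsPerfectScheme p Y.left)
    [X.left.IsSeparated]
    (f : X ⟶ Y) :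
    (∀ (R : Type) [CommRing R] [Algebra k R] [CharP R p],
        Function.Bijective (fun a : R => a ^ p) →
        Function.Injective
          (fun g : Over.mk (Spec.map (CommRingCat.ofHom (algebraMap k R))) ⟶ X =>
            g ≫ f)) ↔
    (∀ (K : Type) [Field K] [Algebra k K] [IsAlgClosed K],
        Function.Injective
          (fun g : Over.mk (Spec.map (CommRingCat.ofHom (algebraMap k K))) ⟶ X =>
            g ≫ f)) :=
  perfect_scheme_mono_iff_injective_on_alg_closed_points_general p k X Y f
end

section
/- Let X be a closed perfect subscheme of the perfection of affine m-space over a perfect field k of characteristic p. Then X is perfectly finitely presented over k; in fact X is the perfection of the finitely presented k-scheme Spec k[T₁,…,T_m]/(𝔞 ∩ k[T₁,…,T_m]), where 𝔞 is the ideal of X in k[T₁^{1/p^∞},…,T_m^{1/p^∞}]. -/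
/-!
`B = k[T₁,…,T_m]` is Noetherian by Hilbert's basis theorem, so `𝔞 ∩ B` is finitely generated.
The map `B/(𝔞 ∩ B) → A/𝔞` is injective by construction, and it is radicial because every element
of `A` already has a `p^r`-th power in `B`; since `A/𝔞` is perfect, it is therefore the perfection
of `B/(𝔞 ∩ B)`.
-/

theorem Ideal.exists_pow_pow_mem_range_quotientMap {R S : Type*} [CommRing R] [CommRing S]
    (f : R →+* S) (I : Ideal S) (q : ℕ) (h : ∀ s : S, ∃ r : ℕ, s ^ q ^ r ∈ Set.range f)
    (z : S ⧸ I) : ∃ r : ℕ, z ^ q ^ r ∈ Set.range (Ideal.quotientMap I f le_rfl) := by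
  obtain ⟨s, rfl⟩ := Ideal.Quotient.mk_surjective z
  obtain ⟨r, x, hx⟩ := h s
  exact ⟨r, Ideal.Quotient.mk _ x, by rw [Ideal.quotientMap_mk, hx, map_pow]⟩

theorem Algebra.isNoetherianRing_adjoin_range {R A ι : Type*} [CommRing R] [IsNoetherianRing R]
    [CommRing A] [Algebra R A] [Finite ι] (x : ι → A) :
    IsNoetherianRing (Algebra.adjoin R (Set.range x)) :=
  isNoetherianRing_of_fg (Subalgebra.fg_def.2 ⟨_, Set.finite_range x, rfl⟩)

theorem closed_perfect_subscheme_perfectly_finitely_presented_general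
    (p : ℕ) (k : Type*) [Field k]
    (m : ℕ) (A : Type*) [CommRing A] [Algebra k A]
    (T : Fin m → A)
    (hgen : ∀ a : A, ∃ r : ℕ, a ^ p ^ r ∈ Algebra.adjoin k (Set.range T))
    (I : Ideal A) :
    (I.comap ((Algebra.adjoin k (Set.range T)).val.toRingHom)).FG ∧
    Function.Injective
      (Ideal.quotientMap I ((Algebra.adjoin k (Set.range T)).val.toRingHom) le_rfl) ∧
    ∀ z : A ⧸ I, ∃ r : ℕ, z ^ p ^ r ∈
      Set.range (Ideal.quotientMap I
        ((Algebra.adjoin k (Set.range T)).val.toRingHom) le_rfl) := by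
  have := Algebra.isNoetherianRing_adjoin_range (R := k) T
  refine ⟨IsNoetherian.noetherian _, Ideal.quotientMap_injective,
    Ideal.exists_pow_pow_mem_range_quotientMap _ I p fun a => ?_⟩
  obtain ⟨r, hr⟩ := hgen a
  exact ⟨r, ⟨_, hr⟩, rfl⟩

/-- Lemma 2.1 of the paper, algebraically.  Let `A = k[T₁^{1/p^∞},…,T_m^{1/p^∞}]`
be the perfection of the polynomial ring over a perfect field `k` of characteristic
`p` (modelled as a perfect `k`-algebra `A` with algebraically independent elements
`T₁,…,T_m` such that every element of `A` has a `p`-power in `B := k[T₁,…,T_m]`),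
and let `X = Spec A/𝔞` be a closed perfect subscheme of `Spec A`.  Then
`𝔞 ∩ B` is a finitely generated ideal of `B` — so `X₀ := Spec B/(𝔞 ∩ B)` is
finitely presented over `k` — and the induced map `B/(𝔞 ∩ B) → A/𝔞` exhibits
`A/𝔞` as the perfection of `B/(𝔞 ∩ B)`: it is injective and every element of
`A/𝔞` has some `p^r`-th power in its image.  In particular `X` is perfectly
finitely presented over `k`. -/
theorem closed_perfect_subscheme_perfectly_finitely_presented
    (p : ℕ) [Fact p.Prime] (k : Type*) [Field k] [CharP k p] [PerfectRing k p]
    (m : ℕ) (A : Type*) [CommRing A] [Algebra k A] [CharP A p]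
    (hAperf : Function.Bijective (fun a : A => a ^ p))
    (T : Fin m → A) (hind : AlgebraicIndependent k T)
    (hgen : ∀ a : A, ∃ r : ℕ, a ^ p ^ r ∈ Algebra.adjoin k (Set.range T))
    (I : Ideal A)
    (hXperf : Function.Bijective (fun a : A ⧸ I => a ^ p)) :
    (I.comap ((Algebra.adjoin k (Set.range T)).val.toRingHom)).FG ∧
    Function.Injective
      (Ideal.quotientMap I ((Algebra.adjoin k (Set.range T)).val.toRingHom) le_rfl) ∧
    ∀ z : A ⧸ I, ∃ r : ℕ, z ^ p ^ r ∈
      Set.range (Ideal.quotientMap I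
        ((Algebra.adjoin k (Set.range T)).val.toRingHom) le_rfl) :=
  closed_perfect_subscheme_perfectly_finitely_presented_general p k m A T hgen I
end

section
/- Suppose gcd(n,p) = 1. Let 1 ≤ m ≤ n−1 and g = gcd(n,m). Let L/K be the unramified extension of degree n of local fields with residue characteristic p, with Frobenius σ, and let K_g ⊆ L be the subfield of degree g over K. Let h ≥ 1 and consider α : {y ∈ U_L^1/U_L^h : N_{n/g}(y) ∈ U_K^1/U_K^h} → U_L^1/U_L^h, y ↦ σ^{n−m}(y)·y^{−1}. Then the image of α equals the kernel of the norm map N_{n/g} : U_L^1/U_L^h → U_{K_g}^1/U_{K_g}^h. -/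
/-!
The norm `N = ∏_{i < n/g} σ^{gi}` kills every `σ^{n-m}(y) y⁻¹`, because `g ∣ n - m` and
`N y` is fixed by `σ^g`. For the converse one counts on `S = {y : σ (N y) = N y}`. By
surjectivity `N` maps `S` onto the `σ`-fixed points `F`, with kernel `ker N`, so
`|S| = |F| |ker N|`. The kernel of `α` on `S` is exactly `F`: if `σ^{n-m} y = y` then
`σ^g y = y` since `g = gcd(n, n - m)`, hence `N y = y^{n/g}` is `σ`-fixed, and as
`x ↦ x^{n/g}` is injective on a `p`-group with `p ∤ n`, `σ` fixes `y`. So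
`|α(S)| = |S| / |F| = |ker N|`.
-/

open Finset

theorem MulAction.pow_gcd_smul_eq_self {G α : Type*} [Group G] [MulAction G α] {x : G} {a : α}
    {m n : ℕ} (hm : x ^ m • a = a) (hn : x ^ n • a = a) : x ^ m.gcd n • a = a := by
  have hm' : x ^ m ∈ stabilizer G a := hm
  have hn' : x ^ n ∈ stabilizer G a := hn
  show x ^ m.gcd n ∈ stabilizer G a
  rw [← zpow_natCast, Nat.gcd_eq_gcd_ab, zpow_add, zpow_mul, zpow_mul, zpow_natCast, zpow_natCast]
  exact mul_mem (zpow_mem hm' _) (zpow_mem hn' _)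

theorem MulAut.pow_apply_eq_self_of_apply_eq_self {M : Type*} [Monoid M] {σ : MulAut M} {y : M}
    (h : σ y = y) (k : ℕ) : (σ ^ k) y = y :=
  (MulAction.stabilizer (MulAut M) y).pow_mem h k

def MulAut.fixedSubgroup {G : Type*} [Group G] (σ : MulAut G) : Subgroup G :=
  (σ : G →* G).eqLocus (MonoidHom.id G)

theorem MulAut.mem_fixedSubgroup {G : Type*} [Group G] {σ : MulAut G} {y : G} :
    y ∈ σ.fixedSubgroup ↔ σ y = y :=
  Iff.rfl

theorem IsPGroup.apply_eq_self_of_apply_pow_eq_self {p k : ℕ} {G F : Type*} [Group G]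
    [FunLike F G G] [MonoidHomClass F G G] (hG : IsPGroup p G) (hk : p.Coprime k) {f : F}
    {y : G} (h : f (y ^ k) = y ^ k) : f y = y :=
  (hG.powEquiv hk).injective (by rwa [powEquiv_apply, powEquiv_apply, ← map_pow])

theorem card_range_eq_card_ker_of_surjective {G H K : Type*} [Group G] [Group H] [Group K]
    [Finite G] (f : G →* H) {φ : G →* K} (hφ : Function.Surjective φ)
    (h : Nat.card f.ker = Nat.card K) : Nat.card f.range = Nat.card φ.ker := by
  have hK : 0 < Nat.card K := by
    have := Finite.of_surjective φ hφ
    exact Nat.card_pos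
  have hf : Nat.card f.ker * Nat.card f.range = Nat.card G := by
    rw [← Subgroup.index_ker]
    exact f.ker.card_mul_index
  have hφG : Nat.card K * Nat.card φ.ker = Nat.card G := by
    rw [mul_comm, ← Subgroup.card_top (G := K), ← MonoidHom.range_eq_top.mpr hφ,
      ← Subgroup.index_ker]
    exact φ.ker.card_mul_index
  rw [h, ← hφG] at hf
  exact Nat.eq_of_mul_eq_mul_left hK hf

theorem Subgroup.map_comap_eq_ker_of_card {G : Type*} [Group G] [Finite G] (β N : G →* G)
    (F : Subgroup G) (hβN : ∀ y, N (β y) = 1)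
    (hker : ∀ y, N y ∈ F → (β y = 1 ↔ y ∈ F))
    (hF : F ≤ F.comap N) (hsurj : F ≤ N.range) : (F.comap N).map β = N.ker := by
  set S := F.comap N
  have hkerS : N.ker ≤ S := fun y hy => by
    simp only [S, mem_comap, MonoidHom.mem_ker.mp hy, one_mem]
  let N' : S →* F := (N.domRestrict S).codRestrict F fun y => y.2
  have hN' : Function.Surjective N' := by
    rintro ⟨b, hb⟩
    obtain ⟨y, rfl⟩ := hsurj hb
    exact ⟨⟨y, hb⟩, rfl⟩
  have hkerβ : Nat.card (β.domRestrict S).ker = Nat.card F := by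
    have : (β.domRestrict S).ker = F.subgroupOf S := by
      ext y
      exact hker y y.2
    rw [this]
    exact Nat.card_congr (subgroupOfEquivOfLe hF).toEquiv
  have hkerN' : N'.ker = N.ker.subgroupOf S := by
    rw [← MonoidHom.ker_domRestrict]
    exact MonoidHom.ker_codRestrict _ _ _
  have hcard : Nat.card (β.domRestrict S).range = Nat.card N.ker := by
    rw [card_range_eq_card_ker_of_surjective _ hN' hkerβ, hkerN']
    exact Nat.card_congr (subgroupOfEquivOfLe hkerS).toEquiv
  rw [← MonoidHom.domRestrict_range]
  refine eq_of_le_of_card_ge ?_ hcard.ge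
  rintro _ ⟨y, rfl⟩
  exact hβN y

section CyclicNorm

variable {A : Type*} [CommGroup A]

/-- The norm `N_{n/g}` of the theorem is `cyclicNorm (σ ^ g) (n / g)`. -/
def cyclicNorm (τ : A ≃* A) (k : ℕ) : A →* A :=
  ∏ i ∈ range k, ((τ ^ i : A ≃* A) : A →* A)

theorem cyclicNorm_apply (τ : A ≃* A) (k : ℕ) (y : A) :
    cyclicNorm τ k y = ∏ i ∈ range k, (τ ^ i) y :=
  MonoidHom.finsetProd_apply _ _ _

theorem cyclicNorm_apply_of_apply_eq_self {τ : A ≃* A} {y : A} (hy : τ y = y) (k : ℕ) :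
    cyclicNorm τ k y = y ^ k := by
  simp only [cyclicNorm_apply, MulAut.pow_apply_eq_self_of_apply_eq_self hy, prod_const,
    card_range]

theorem map_cyclicNorm_of_commute {σ τ : A ≃* A} (h : Commute σ τ) (k : ℕ) (y : A) :
    σ (cyclicNorm τ k y) = cyclicNorm τ k (σ y) := by
  simp only [cyclicNorm_apply, map_prod, ← MulAut.mul_apply, (h.pow_right _).eq]

theorem apply_cyclicNorm_of_pow_eq_one {τ : A ≃* A} {k : ℕ} (hτ : τ ^ k = 1) (y : A) :
    τ (cyclicNorm τ k y) = cyclicNorm τ k y := by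
  have hshift : τ (cyclicNorm τ k y) * y = cyclicNorm τ k y * (τ ^ k) y := by
    simp only [cyclicNorm_apply, map_prod, ← MulAut.mul_apply, ← pow_succ']
    rw [← prod_range_succ, prod_range_succ' (fun i => (τ ^ i) y), pow_zero, MulAut.one_apply]
  rwa [hτ, MulAut.one_apply, mul_left_inj] at hshift

end CyclicNorm

section UnramifiedNorm

variable {A : Type*} [CommGroup A] {σ : A ≃* A} {n : ℕ}

theorem cyclicNorm_pow_apply_mul_inv (hσ : σ ^ n = 1) {g a : ℕ} (hgn : g ∣ n) (hga : g ∣ a)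
    (y : A) : cyclicNorm (σ ^ g) (n / g) ((σ ^ a) y * y⁻¹) = 1 := by
  have hfix : (σ ^ g) (cyclicNorm (σ ^ g) (n / g) y) = cyclicNorm (σ ^ g) (n / g) y :=
    apply_cyclicNorm_of_pow_eq_one (by rw [← pow_mul, Nat.mul_div_cancel' hgn, hσ]) y
  obtain ⟨c, rfl⟩ := hga
  rw [map_mul, map_inv, ← map_cyclicNorm_of_commute (Commute.pow_pow_self σ _ _), pow_mul,
    MulAut.pow_apply_eq_self_of_apply_eq_self hfix, mul_inv_cancel]

theorem apply_eq_self_of_pow_apply_eq_self {p a : ℕ} (hA : IsPGroup p A) (hpn : n.Coprime p)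
    (hσ : σ ^ n = 1) {y : A}
    (hN : σ (cyclicNorm (σ ^ n.gcd a) (n / n.gcd a) y) =
      cyclicNorm (σ ^ n.gcd a) (n / n.gcd a) y)
    (hy : (σ ^ a) y = y) : σ y = y := by
  have hgy : (σ ^ n.gcd a) y = y :=
    MulAction.pow_gcd_smul_eq_self (a := y) (by rw [hσ, one_smul]) hy
  rw [cyclicNorm_apply_of_apply_eq_self hgy] at hN
  exact hA.apply_eq_self_of_apply_pow_eq_self
    (hpn.coprime_dvd_left (Nat.div_dvd_of_dvd (n.gcd_dvd_left a))).symm hN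

end UnramifiedNorm

theorem image_alpha_eq_ker_norm_general
    (p n m : ℕ) (hpn : Nat.Coprime n p)
    (hm2 : m ≤ n - 1)
    (g : ℕ) (hg : g = Nat.gcd n m)
    (A : Type*) [CommGroup A] [Finite A]
    (hpgroup : ∀ a : A, ∃ k : ℕ, a ^ p ^ k = 1)
    (σ : A ≃* A) (hσn : σ ^ n = 1)
    (Nm : A → A) (hNm : ∀ y : A, Nm y = ∏ i ∈ Finset.range (n / g), (σ ^ (g * i)) y)
    (hNmsurj : ∀ b : A, (σ ^ g) b = b → ∃ y : A, Nm y = b) :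
    {z : A | ∃ y : A, σ (Nm y) = Nm y ∧ (σ ^ (n - m)) y * y⁻¹ = z} =
      {z : A | Nm z = 1} := by
  have hgn : g ∣ n := hg ▸ n.gcd_dvd_left m
  rw [← Nat.gcd_self_sub_right (by omega)] at hg
  obtain rfl : Nm = cyclicNorm (σ ^ g) (n / g) :=
    funext fun y => by simp only [hNm, cyclicNorm_apply, pow_mul]
  let β : A →* A := ((σ ^ (n - m) : A ≃* A) : A →* A) / MonoidHom.id A
  have hβ (y : A) : β y = (σ ^ (n - m)) y * y⁻¹ := div_eq_mul_inv _ _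
  have key := Subgroup.map_comap_eq_ker_of_card β (cyclicNorm (σ ^ g) (n / g))
    (MulAut.fixedSubgroup σ)
    (fun y => by rw [hβ]; exact cyclicNorm_pow_apply_mul_inv hσn hgn (hg ▸ n.gcd_dvd_right _) y)
    (fun y hy => by
      subst hg
      rw [hβ, mul_inv_eq_one]
      exact ⟨apply_eq_self_of_pow_apply_eq_self hpgroup hpn hσn hy,
        fun h => MulAut.pow_apply_eq_self_of_apply_eq_self h _⟩)
    (fun y hy => by
      rw [Subgroup.mem_comap, MulAut.mem_fixedSubgroup,
        map_cyclicNorm_of_commute (Commute.self_pow σ g), MulAut.mem_fixedSubgroup.mp hy])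
    (fun b hb => hNmsurj b (MulAut.pow_apply_eq_self_of_apply_eq_self hb g))
  ext z
  simpa only [Set.mem_ofPred_eq, Subgroup.mem_map, Subgroup.mem_comap, MulAut.mem_fixedSubgroup,
    hβ, MonoidHom.mem_ker] using SetLike.ext_iff.mp key z

/-- Abstract form of the image-of-`α` lemma for unit groups of unramified extensions.
`A` plays the role of `U_L^1/U_L^h` (a finite abelian `p`-group), `σ` is the
Frobenius of `L/K` (of order dividing `n`, acting on `A`), the `σ`-fixed points
correspond to `U_K^1/U_K^h`, and `Nm` is the norm `N_{n/g} = ∏_{i<n/g} σ^{gi}`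
(surjective onto the `σ^g`-fixed points, as for the displayed quotients of unit
groups).  Suppose `gcd(n,p) = 1`, `1 ≤ m ≤ n − 1`, and `g = gcd(n,m)`.  Then the
image of `α : y ↦ σ^{n−m}(y)·y⁻¹`, defined on `{y : Nm y is σ-fixed}`, is exactly
the kernel of `Nm`. -/
theorem image_alpha_eq_ker_norm
    (p n m : ℕ) (hp : p.Prime) (hpn : Nat.Coprime n p)
    (hm1 : 1 ≤ m) (hm2 : m ≤ n - 1) (hn : 2 ≤ n)
    (g : ℕ) (hg : g = Nat.gcd n m)
    (A : Type*) [CommGroup A] [Finite A]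
    (hpgroup : ∀ a : A, ∃ k : ℕ, a ^ p ^ k = 1)
    (σ : A ≃* A) (hσn : σ ^ n = 1)
    (Nm : A → A) (hNm : ∀ y : A, Nm y = ∏ i ∈ Finset.range (n / g), (σ ^ (g * i)) y)
    (hNmsurj : ∀ b : A, (σ ^ g) b = b → ∃ y : A, Nm y = b) :
    {z : A | ∃ y : A, σ (Nm y) = Nm y ∧ (σ ^ (n - m)) y * y⁻¹ = z} =
      {z : A | Nm z = 1} :=
  image_alpha_eq_ker_norm_general p n m hpn hm2 g hg A hpgroup σ hσn Nm hNm hNmsurj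
end

section
/- Let p be a prime, q a power of p, and let a, b, c, d be positive integers with a, b < p and c < d. Write d = γc + r with 0 ≤ r < c. Then the plane curve over 𝔽_p defined by a·Tr_{c}(x) + b·Tr_{d}(x) = Tr_{d}(y^q − y) is 𝔽_p-isomorphic to the plane curve defined by b·Tr_{r}(x) + (a + bγ)·Tr_{c}(x) = Tr_{c}(y^q − y), where Tr_{s}(x) := Σ_{i=0}^{s−1} x^{q^i}. -/
/-!
Write `x = X 0`, `y = X 1`, `q = p ^ e` and `Tr_s(t) = ∑_{i<s} t ^ q ^ i`. Since `t ↦ t ^ q` is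
additive, `Tr_s` is additive, commutes with multiplication by constants of `𝔽_q`, and telescopes
on Artin–Schreier differences: `Tr_s(t ^ q - t) = t ^ q ^ s - t`.

So the shear `x ↦ x + b⁻¹ (y ^ q - y)` adds `y ^ q ^ d - y = Tr_d(y ^ q - y)` to `b Tr_d(x)`,
cancelling the right-hand side, and adds `a b⁻¹ (y ^ q ^ c - y)` to `a Tr_c(x)`; rescaling
`y ↦ -(b / a) y` makes that coefficient `-1`. Finally `Tr_{c+n}(x) = Tr_c(x) + Tr_n(x) ^ q ^ c`
gives, by induction on `γ`, `Tr_{γc+r}(x) - γ Tr_c(x) - Tr_r(x) = H ^ q ^ c - H` for a polynomial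
`H` in `x`, and the shear `y ↦ y + b H(x)` absorbs this into `y ^ q ^ c - y = Tr_c(y ^ q - y)`.
-/

open MvPolynomial Finset

def frobTrace {R : Type*} [CommRing R] (q s : ℕ) (t : R) : R :=
  ∑ i ∈ range s, t ^ q ^ i

section frobTrace

variable {R S : Type*} [CommRing R] [CommRing S]

@[simp]
theorem frobTrace_zero (q : ℕ) (t : R) : frobTrace q 0 t = 0 := sum_range_zero _

theorem map_frobTrace {F : Type*} [FunLike F R S] [RingHomClass F R S] (f : F) (q s : ℕ)
    (t : R) : f (frobTrace q s t) = frobTrace q s (f t) := by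
  simp only [frobTrace, map_sum, map_pow]

theorem pow_pow_eq_self_of_pow_eq_self {k : R} {q : ℕ} (hk : k ^ q = k) (n : ℕ) :
    k ^ q ^ n = k := by
  induction n with
  | zero => rw [pow_zero, pow_one]
  | succ n ih => rw [pow_succ, pow_mul, ih, hk]

theorem frobTrace_mul_left_of_pow_eq_self {k : R} {q : ℕ} (hk : k ^ q = k) (s : ℕ) (t : R) :
    frobTrace q s (k * t) = k * frobTrace q s t := by
  simp only [frobTrace, mul_pow, pow_pow_eq_self_of_pow_eq_self hk, mul_sum]

variable {p : ℕ} [ExpChar R p] (e : ℕ)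

theorem pow_expChar_pow_pow_eq_iterateFrobenius (t : R) (n : ℕ) :
    t ^ (p ^ e) ^ n = iterateFrobenius R p (e * n) t := by
  rw [iterateFrobenius_def, pow_mul]

theorem add_pow_expChar_pow_pow (t u : R) (n : ℕ) :
    (t + u) ^ (p ^ e) ^ n = t ^ (p ^ e) ^ n + u ^ (p ^ e) ^ n := by
  simp only [pow_expChar_pow_pow_eq_iterateFrobenius, map_add]

theorem sub_pow_expChar_pow_pow (t u : R) (n : ℕ) :
    (t - u) ^ (p ^ e) ^ n = t ^ (p ^ e) ^ n - u ^ (p ^ e) ^ n := by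
  simp only [pow_expChar_pow_pow_eq_iterateFrobenius, map_sub]

theorem frobTrace_add (s : ℕ) (t u : R) :
    frobTrace (p ^ e) s (t + u) = frobTrace (p ^ e) s t + frobTrace (p ^ e) s u := by
  simp only [frobTrace, add_pow_expChar_pow_pow, sum_add_distrib]

theorem frobTrace_add_length (m n : ℕ) (t : R) :
    frobTrace (p ^ e) (m + n) t
      = frobTrace (p ^ e) m t + frobTrace (p ^ e) n t ^ (p ^ e) ^ m := by
  simp only [frobTrace, sum_range_add, pow_expChar_pow_pow_eq_iterateFrobenius, map_sum,
    ← mul_add, ← iterateFrobenius_add_apply]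

theorem frobTrace_pow_sub_self (s : ℕ) (t : R) :
    frobTrace (p ^ e) s (t ^ p ^ e - t) = t ^ (p ^ e) ^ s - t := by
  have h (i : ℕ) : (t ^ p ^ e - t) ^ (p ^ e) ^ i = t ^ (p ^ e) ^ (i + 1) - t ^ (p ^ e) ^ i := by
    rw [sub_pow_expChar_pow_pow, ← pow_mul, ← pow_succ']
  simp only [frobTrace, h, sum_range_sub (fun i ↦ t ^ (p ^ e) ^ i), pow_zero, pow_one]

theorem frobTrace_add_mul_pow_sub_self {k : R} (hk : k ^ p ^ e = k) (s : ℕ) (t u : R) :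
    frobTrace (p ^ e) s (t + k * (u ^ p ^ e - u))
      = frobTrace (p ^ e) s t + k * (u ^ (p ^ e) ^ s - u) := by
  rw [frobTrace_add, frobTrace_mul_left_of_pow_eq_self hk, frobTrace_pow_sub_self]

theorem exists_frobTrace_mul_add_sub_eq_pow_sub_self (c γ r : ℕ) (t : R) :
    ∃ H : R, frobTrace (p ^ e) (γ * c + r) t
        - (γ * frobTrace (p ^ e) c t + frobTrace (p ^ e) r t) = H ^ (p ^ e) ^ c - H := by
  induction γ with
  | zero => exact ⟨0, by simp [zero_pow (pow_ne_zero c (expChar_pow_pos R p e).ne')]⟩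
  | succ γ ih =>
    obtain ⟨H, hH⟩ := ih
    refine ⟨H + frobTrace (p ^ e) (γ * c + r) t, ?_⟩
    rw [show (γ + 1) * c + r = c + (γ * c + r) by ring, frobTrace_add_length,
      add_pow_expChar_pow_pow]
    push_cast
    linear_combination hH

end frobTrace

namespace MvPolynomial

variable {R σ : Type*} [CommRing R] [DecidableEq σ]

noncomputable def elementaryEquiv (i j : σ) (hij : i ≠ j) (u : Rˣ) (P : Polynomial R) :
    MvPolynomial σ R ≃ₐ[R] MvPolynomial σ R :=
  AlgEquiv.ofAlgHom (aeval (Function.update X i (C (u : R) * X i + Polynomial.aeval (X j) P)))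
    (aeval (Function.update X i (C (↑u⁻¹ : R) * (X i - Polynomial.aeval (X j) P))))
    (algHom_ext fun k ↦ by
      obtain rfl | hk := eq_or_ne k i
      · simp [← Polynomial.aeval_algHom_apply, hij.symm, ← mul_assoc, ← C_mul]
      · simp [hk])
    (algHom_ext fun k ↦ by
      obtain rfl | hk := eq_or_ne k i
      · simp [← Polynomial.aeval_algHom_apply, hij.symm, ← mul_assoc, ← C_mul]
      · simp [hk])

variable {i j : σ} {hij : i ≠ j} {u : Rˣ} {P : Polynomial R}

@[simp]
theorem elementaryEquiv_X_self :
    elementaryEquiv i j hij u P (X i) = C (u : R) * X i + Polynomial.aeval (X j) P := by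
  simp [elementaryEquiv]

@[simp]
theorem elementaryEquiv_X_other : elementaryEquiv i j hij u P (X j) = X j := by
  simp [elementaryEquiv, hij.symm]

@[simp]
theorem elementaryEquiv_C (a : R) : elementaryEquiv i j hij u P (C a) = C a :=
  (elementaryEquiv i j hij u P).commutes a

end MvPolynomial

noncomputable def AlgEquiv.quotientSpanSingleton {R A : Type*} [CommSemiring R] [CommRing A]
    [Algebra R A] (φ : A ≃ₐ[R] A) {f g : A} (h : φ f = g) :
    (A ⧸ Ideal.span {f}) ≃ₐ[R] A ⧸ Ideal.span {g} :=
  Ideal.quotientEquivAlg _ _ φ (by rw [Ideal.map_span, Set.image_singleton, ← h]; rfl)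

section PlaneCurve

variable {K : Type*} [CommRing K]

theorem elementaryEquiv_scale_pow_sub_self {q : ℕ} {α β κ : K} {μ : Kˣ} (hκμ : κ * μ = -1)
    (hμ : (μ : K) ^ q = μ) (c d : ℕ) :
    elementaryEquiv (1 : Fin 2) 0 one_ne_zero μ 0
        (C α * frobTrace q c (X 0) + C β * frobTrace q d (X 0) + C κ * (X 1 ^ q ^ c - X 1))
      = C α * frobTrace q c (X 0) + C β * frobTrace q d (X 0) - (X 1 ^ q ^ c - X 1) := by
  have hCμ : (C (μ : K) : MvPolynomial (Fin 2) K) ^ q = C (μ : K) := by rw [← map_pow, hμ]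
  have hCκμ : (C κ : MvPolynomial (Fin 2) K) * C (μ : K) = -1 := by
    rw [← C_mul, hκμ, C_neg, C_1]
  simp only [map_add, map_sub, map_mul, elementaryEquiv_C, map_frobTrace, map_pow,
    elementaryEquiv_X_self, elementaryEquiv_X_other, map_zero, add_zero, mul_pow,
    pow_pow_eq_self_of_pow_eq_self hCμ]
  linear_combination (X 1 ^ q ^ c - X 1) * hCκμ

variable {p : ℕ} [ExpChar K p] {e : ℕ}

theorem elementaryEquiv_cancel_frobTrace_pow_sub_self {α β ν : K} (hβν : β * ν = 1)
    (hν : ν ^ p ^ e = ν) (c d : ℕ) :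
    elementaryEquiv (0 : Fin 2) 1 zero_ne_one 1
        (Polynomial.C ν * (Polynomial.X ^ p ^ e - Polynomial.X))
        (C α * frobTrace (p ^ e) c (X 0) + C β * frobTrace (p ^ e) d (X 0)
          - frobTrace (p ^ e) d (X 1 ^ p ^ e - X 1))
      = C α * frobTrace (p ^ e) c (X 0) + C β * frobTrace (p ^ e) d (X 0)
          + C (α * ν) * (X 1 ^ (p ^ e) ^ c - X 1) := by
  have hCν : (C ν : MvPolynomial (Fin 2) K) ^ p ^ e = C ν := by rw [← map_pow, hν]
  have hCβν : (C β : MvPolynomial (Fin 2) K) * C ν = 1 := by rw [← C_mul, hβν, C_1]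
  simp only [map_add, map_sub, map_mul, elementaryEquiv_C, map_frobTrace, map_pow,
    elementaryEquiv_X_self, elementaryEquiv_X_other, Units.val_one, C_1, one_mul,
    Polynomial.aeval_C, Polynomial.aeval_X, algebraMap_eq]
  rw [frobTrace_add_mul_pow_sub_self e hCν, frobTrace_add_mul_pow_sub_self e hCν,
    frobTrace_pow_sub_self]
  linear_combination (X 1 ^ (p ^ e) ^ d - X 1) * hCβν

theorem exists_elementaryEquiv_reduce_frobTrace {β : K} (hβ : β ^ p ^ e = β) (α : K)
    (c γ r : ℕ) :
    ∃ P : Polynomial K, elementaryEquiv (1 : Fin 2) 0 one_ne_zero 1 P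
        (C α * frobTrace (p ^ e) c (X 0) + C β * frobTrace (p ^ e) (γ * c + r) (X 0)
          - (X 1 ^ (p ^ e) ^ c - X 1))
      = C β * frobTrace (p ^ e) r (X 0)
          + (C α + C β * (γ : MvPolynomial (Fin 2) K)) * frobTrace (p ^ e) c (X 0)
          - (X 1 ^ (p ^ e) ^ c - X 1) := by
  obtain ⟨H, hH⟩ :=
    exists_frobTrace_mul_add_sub_eq_pow_sub_self (p := p) e c γ r (Polynomial.X : Polynomial K)
  refine ⟨Polynomial.C β * H, ?_⟩
  have hHx := congrArg (Polynomial.aeval (X 0 : MvPolynomial (Fin 2) K)) hH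
  simp only [map_sub, map_add, map_mul, map_natCast, map_frobTrace, map_pow,
    Polynomial.aeval_X] at hHx
  have hCβ : (C β : MvPolynomial (Fin 2) K) ^ p ^ e = C β := by rw [← map_pow, hβ]
  simp only [map_add, map_sub, map_mul, elementaryEquiv_C, map_frobTrace, map_pow,
    elementaryEquiv_X_self, elementaryEquiv_X_other, Units.val_one, C_1, one_mul,
    Polynomial.aeval_C, algebraMap_eq, add_pow_expChar_pow_pow, mul_pow,
    pow_pow_eq_self_of_pow_eq_self hCβ]
  linear_combination C β * hHx

end PlaneCurve

theorem ZMod.natCast_ne_zero_of_pos_of_lt {p a : ℕ} (ha0 : 0 < a) (ha : a < p) :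
    (a : ZMod p) ≠ 0 := by
  rw [Ne, ZMod.natCast_eq_zero_iff]
  exact Nat.not_dvd_of_pos_of_lt ha0 ha

theorem curve_euclidean_reduction_general
    (p : ℕ) [Fact p.Prime] (e q : ℕ) (hq : q = p ^ e)
    (a b c d γ r : ℕ) (ha0 : 0 < a) (hb0 : 0 < b)
    (ha : a < p) (hb : b < p)
    (hdiv : d = γ * c + r)
    (Tr : ℕ → MvPolynomial (Fin 2) (ZMod p) → MvPolynomial (Fin 2) (ZMod p))
    (hTr : ∀ s t, Tr s t = ∑ i ∈ Finset.range s, t ^ q ^ i) :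
    Nonempty
      ((MvPolynomial (Fin 2) (ZMod p) ⧸
          Ideal.span {(a : MvPolynomial (Fin 2) (ZMod p)) * Tr c (X 0) + b * Tr d (X 0)
            - Tr d ((X 1) ^ q - X 1)}) ≃ₐ[ZMod p]
        (MvPolynomial (Fin 2) (ZMod p) ⧸
          Ideal.span {(b : MvPolynomial (Fin 2) (ZMod p)) * Tr r (X 0)
            + ((a : MvPolynomial (Fin 2) (ZMod p)) + b * γ) * Tr c (X 0)
            - Tr c ((X 1) ^ q - X 1)})) := by
  subst hq hdiv
  obtain rfl : Tr = frobTrace (p ^ e) := funext₂ hTr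
  have hα := ZMod.natCast_ne_zero_of_pos_of_lt ha0 ha
  have hβ := ZMod.natCast_ne_zero_of_pos_of_lt hb0 hb
  have hfix (x : ZMod p) : x ^ p ^ e = x := ZMod.pow_card_pow x
  obtain ⟨P, hP⟩ := exists_elementaryEquiv_reduce_frobTrace (hfix b) a c γ r
  refine ⟨AlgEquiv.quotientSpanSingleton
    (((elementaryEquiv 0 1 zero_ne_one 1
      (Polynomial.C (b : ZMod p)⁻¹ * (Polynomial.X ^ p ^ e - Polynomial.X))).trans
      (elementaryEquiv 1 0 one_ne_zero (Units.mk0 (-(b / a : ZMod p)) (by simp [hα, hβ])) 0)).trans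
      (elementaryEquiv 1 0 one_ne_zero 1 P)) ?_⟩
  rw [← C_eq_coe_nat a, ← C_eq_coe_nat b, AlgEquiv.trans_apply, AlgEquiv.trans_apply,
    elementaryEquiv_cancel_frobTrace_pow_sub_self (mul_inv_cancel₀ hβ) (hfix _),
    elementaryEquiv_scale_pow_sub_self (by rw [Units.val_mk0]; field_simp) (hfix _), hP, frobTrace_pow_sub_self]

/-- Euclidean-algorithm reduction of Artin–Schreier-type curves: with
`Tr_s(t) = ∑_{i<s} t^{q^i}` and `d = γc + r` (Euclidean division), `a,b < p`,
`0 < c < d`, the affine plane curve `a·Tr_c(x) + b·Tr_d(x) = Tr_d(y^q − y)` over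
`𝔽_p` is `𝔽_p`-isomorphic to the curve `b·Tr_r(x) + (a+bγ)·Tr_c(x) = Tr_c(y^q − y)`. -/
theorem curve_euclidean_reduction
    (p : ℕ) [Fact p.Prime] (e q : ℕ) (he : 0 < e) (hq : q = p ^ e)
    (a b c d γ r : ℕ) (ha0 : 0 < a) (hb0 : 0 < b) (hc0 : 0 < c) (hd0 : 0 < d)
    (ha : a < p) (hb : b < p) (hcd : c < d)
    (hdiv : d = γ * c + r) (hr : r < c)
    (Tr : ℕ → MvPolynomial (Fin 2) (ZMod p) → MvPolynomial (Fin 2) (ZMod p))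
    (hTr : ∀ s t, Tr s t = ∑ i ∈ Finset.range s, t ^ q ^ i) :
    Nonempty
      ((MvPolynomial (Fin 2) (ZMod p) ⧸
          Ideal.span {(a : MvPolynomial (Fin 2) (ZMod p)) * Tr c (X 0) + b * Tr d (X 0)
            - Tr d ((X 1) ^ q - X 1)}) ≃ₐ[ZMod p]
        (MvPolynomial (Fin 2) (ZMod p) ⧸
          Ideal.span {(b : MvPolynomial (Fin 2) (ZMod p)) * Tr r (X 0)
            + ((a : MvPolynomial (Fin 2) (ZMod p)) + b * γ) * Tr c (X 0)
            - Tr c ((X 1) ^ q - X 1)})) :=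
  curve_euclidean_reduction_general p e q hq a b c d γ r ha0 hb0 ha hb hdiv Tr hTr
end

section
/- Let S be a commutative ring, n ≥ 2 and 1 ≤ i₀ ≤ n−1. Let x₁, …, x_n ∈ S and σ a ring endomorphism of S. Let g_n(x) be the n×n matrix whose j-th column is σ^{j−1} applied entrywise to (x₁,…,x_n). For 1 ≤ i ≤ i₀ let m_i be the (n−i₀+1)×(n−i₀+1) minor of g_n(x) formed from rows i, i₀+1, i₀+2, …, n and the first n−i₀+1 columns. Let g_{i₀}(m) be the i₀×i₀ matrix whose j-th column is σ^{j−1}(m₁,…,m_{i₀}), and g_{n−i₀}(x′) the (n−i₀)×(n−i₀) matrix built analogously from x′ = (x_{i₀+1},…,x_n). Then det g_{i₀}(m) = det g_n(x) · Π_{j=1}^{i₀−1} σ^j(det g_{n−i₀}(x′)). -/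
/-- The `σ`-twisted Moore-type matrix of a vector `v`: its `j`-th column is
`σ^j` applied entrywise to `v`. -/
noncomputable def gmat {S : Type*} [CommRing S] (σ : S →+* S) {r : ℕ}
    (v : Fin r → S) : Matrix (Fin r) (Fin r) S :=
  Matrix.of fun i j => (σ ^ (j : ℕ)) (v i)

/-- For `1 ≤ i₀ < n`, the vector of minors `m_i` of `gmat σ x`:  `m_i` is the
determinant of the `(n−i₀+1)×(n−i₀+1)` submatrix with rows `i, i₀+1, …, n`
(1-indexed) and the first `n−i₀+1` columns. -/
noncomputable def minorVec {S : Type*} [CommRing S] (σ : S →+* S) {n : ℕ}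
    (i₀ : ℕ) (h : i₀ < n) (x : Fin n → S) : Fin i₀ → S := fun i =>
  (gmat σ (fun a : Fin (n - i₀ + 1) =>
    if (a : ℕ) = 0 then x ⟨(i : ℕ), lt_trans i.2 h⟩
    else x ⟨i₀ + (a : ℕ) - 1, by have := a.2; omega⟩)).det

/-!
Write `A = g_n(x)` and `w = n - i₀`. Expanding the minor of `A` on rows `r, i₀+1, …, n` and
columns `j, …, j+w` along its first row writes it as a combination of the entries of row `r`
in these columns; hence `A * B = P` for a lower triangular `B` with diagonal entries
`σ^{j+1}(det g_w(x'))` (`j < i₀`) and `1`. The first `i₀` columns of `P` vanish in rows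
`i₀+1, …, n` (a repeated row), so `P` is block upper triangular with diagonal blocks
`g_{i₀}(m)` and `σ^{i₀}(g_w(x'))`. This proves the identity multiplied by
`σ^{i₀}(det g_w(x'))`. That factor is cancelled in the generic case, the polynomial ring
`ℤ[X_{i,k}]` with `σ` shifting `k`, where it is nonzero; the general case follows by the
specialization `X_{i,k} ↦ σ^k(x_i)`.
-/

namespace Matrix

variable {R : Type*} [CommRing R] {p w : ℕ}

def colWindow (j : Fin p) (t : Fin (w + 1)) : Fin (p + w) := ⟨j + t, by omega⟩

noncomputable def borderedMinors (A : Matrix (Fin (p + w)) (Fin (p + w)) R) :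
    Matrix (Fin p) (Fin p) R :=
  of fun i j => (A.submatrix (Fin.cons (Fin.castAdd w i) (Fin.natAdd p)) (colWindow j)).det

noncomputable def laplaceCoeffs (A : Matrix (Fin (p + w)) (Fin (p + w)) R) :
    Matrix (Fin (p + w)) (Fin (p + w)) R :=
  of fun c => Fin.addCases
    (fun j => ∑ t : Fin (w + 1), if colWindow j t = c then
      (-1) ^ (t : ℕ) * (A.submatrix (Fin.natAdd p) (colWindow j ∘ t.succAbove)).det else 0)
    (fun k => (1 : Matrix (Fin (p + w)) (Fin (p + w)) R) c (Fin.natAdd p k))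

variable (A : Matrix (Fin (p + w)) (Fin (p + w)) R)

theorem mul_laplaceCoeffs_castAdd (r : Fin (p + w)) (j : Fin p) :
    (A * laplaceCoeffs A) r (Fin.castAdd w j) =
      (A.submatrix (Fin.cons r (Fin.natAdd p)) (colWindow j)).det := by
  simp only [mul_apply, laplaceCoeffs, of_apply, Fin.addCases_left, Finset.mul_sum, mul_ite,
    mul_zero]
  rw [Finset.sum_comm, det_succ_row_zero]
  refine Finset.sum_congr rfl fun t _ => ?_
  rw [Finset.sum_ite_eq]
  simp only [Finset.mem_univ, if_true, submatrix_apply, Fin.cons_zero, submatrix_submatrix,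
    Fin.cons_comp_succ]
  ring

theorem mul_laplaceCoeffs_natAdd (r : Fin (p + w)) (k : Fin w) :
    (A * laplaceCoeffs A) r (Fin.natAdd p k) = A r (Fin.natAdd p k) := by
  simp only [mul_apply, laplaceCoeffs, of_apply, Fin.addCases_right]
  rw [← mul_apply, mul_one]

theorem laplaceCoeffs_isLowerTriangular : (laplaceCoeffs A).IsLowerTriangular := by
  intro c j hcj
  replace hcj : c < j := hcj
  induction j using Fin.addCases with
  | left j =>
    simp only [laplaceCoeffs, of_apply, Fin.addCases_left]
    refine Finset.sum_eq_zero fun t _ => if_neg fun h => ?_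
    rw [← h, Fin.lt_def] at hcj
    simp [colWindow] at hcj
  | right k => simp [laplaceCoeffs, hcj.ne]

theorem det_laplaceCoeffs :
    (laplaceCoeffs A).det =
      ∏ j : Fin p, (A.submatrix (Fin.natAdd p) (colWindow j ∘ Fin.succ)).det := by
  rw [det_of_isLowerTriangular _ (laplaceCoeffs_isLowerTriangular A), Fin.prod_univ_add]
  have hdiag (j : Fin p) (t : Fin (w + 1)) : colWindow j t = Fin.castAdd w j ↔ t = 0 := by
    simp only [Fin.ext_iff, colWindow, Fin.val_castAdd, Fin.val_zero]
    omega
  have hdiag' (j : Fin p) : laplaceCoeffs A (Fin.castAdd w j) (Fin.castAdd w j) =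
      (A.submatrix (Fin.natAdd p) (colWindow j ∘ Fin.succ)).det := by
    simp only [laplaceCoeffs, of_apply, Fin.addCases_left, hdiag, Finset.sum_ite_eq',
      Finset.mem_univ, if_true, Fin.val_zero, pow_zero, one_mul, Fin.succAbove_zero]
  have hone (k : Fin w) : laplaceCoeffs A (Fin.natAdd p k) (Fin.natAdd p k) = 1 := by
    simp only [laplaceCoeffs, of_apply, Fin.addCases_right, one_apply_eq]
  simp only [hdiag', hone, Finset.prod_const_one, mul_one]

theorem det_mul_laplaceCoeffs :
    (A * laplaceCoeffs A).det =
      (borderedMinors A).det * (A.submatrix (Fin.natAdd p) (Fin.natAdd p)).det := by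
  rw [← det_submatrix_equiv_self finSumFinEquiv]
  set P := (A * laplaceCoeffs A).submatrix finSumFinEquiv finSumFinEquiv
  have h11 : P.toBlocks₁₁ = borderedMinors A := by
    ext i j
    simp [P, toBlocks₁₁, borderedMinors, mul_laplaceCoeffs_castAdd]
  have h21 : P.toBlocks₂₁ = 0 := by
    ext s j
    simp only [P, toBlocks₂₁, of_apply, submatrix_apply, finSumFinEquiv_apply_left,
      finSumFinEquiv_apply_right, mul_laplaceCoeffs_castAdd, zero_apply]
    refine det_zero_of_row_eq (Fin.succ_ne_zero s).symm ?_
    funext b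
    simp
  have h22 : P.toBlocks₂₂ = A.submatrix (Fin.natAdd p) (Fin.natAdd p) := by
    ext s t
    simp [P, toBlocks₂₂, mul_laplaceCoeffs_natAdd]
  rw [← fromBlocks_toBlocks P, h11, h21, h22, det_fromBlocks_zero₂₁]

theorem det_borderedMinors_mul_det :
    (borderedMinors A).det * (A.submatrix (Fin.natAdd p) (Fin.natAdd p)).det =
      A.det * ∏ j : Fin p, (A.submatrix (Fin.natAdd p) (colWindow j ∘ Fin.succ)).det := by
  rw [← det_mul_laplaceCoeffs, det_mul, det_laplaceCoeffs]

end Matrix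

theorem prod_fin_succ_eq_prod_Icc_mul {M : Type*} [CommMonoid M] {p : ℕ} (hp : 1 ≤ p)
    (f : ℕ → M) : ∏ j : Fin p, f (j + 1) = (∏ j ∈ Finset.Icc 1 (p - 1), f j) * f p := by
  obtain ⟨q, rfl⟩ := Nat.exists_eq_add_of_le' hp
  simp only [Fin.prod_univ_castSucc, Fin.val_castSucc, Fin.val_last, Nat.add_sub_cancel]
  rw [Fin.prod_univ_eq_prod_range (fun i => f (i + 1)), Finset.range_eq_Ico,
    Finset.prod_Ico_add' f, Finset.Ico_add_one_right_eq_Icc]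

open Matrix

section gmat

variable {S : Type*} [CommRing S] (σ : S →+* S)

theorem det_gmat_comp_cast {a b : ℕ} (hab : a = b) (v : Fin b → S) :
    (gmat σ (v ∘ Fin.cast hab)).det = (gmat σ v).det := by
  subst hab
  rfl

theorem det_gmat_submatrix_of_shift {N k : ℕ} (x : Fin N → S) (r c : Fin k → Fin N) (j : ℕ)
    (hc : ∀ t, (c t : ℕ) = j + t) :
    ((gmat σ x).submatrix r c).det = (σ ^ j) (gmat σ (x ∘ r)).det := by
  rw [RingHom.map_det]
  congr 1
  ext a b
  simp [gmat, hc, Function.iterate_add_apply]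

theorem map_det_gmat {R : Type*} [CommRing R] {σR : R →+* R} {φ : R →+* S}
    (hφ : Function.Semiconj φ σR σ) {k : ℕ} (v : Fin k → R) :
    φ (gmat σR v).det = (gmat σ (φ ∘ v)).det := by
  rw [RingHom.map_det]
  congr 1
  ext a b
  simp [gmat, RingHom.coe_pow, (hφ.iterate_right _) (v a)]

variable {p w : ℕ}

noncomputable def minors (x : Fin (p + w) → S) : Fin p → S := fun i =>
  (gmat σ (Fin.cons (x (Fin.castAdd w i)) (x ∘ Fin.natAdd p))).det

theorem minorVec_eq_minors (h : p < p + w) (x : Fin (p + w) → S) :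
    minorVec σ p h x = minors σ x := by
  funext i
  rw [minorVec, minors, ← det_gmat_comp_cast σ (by omega : p + w - p + 1 = w + 1)]
  congr 2
  funext a
  exact Fin.cases rfl (fun _ => rfl) a

theorem map_minors {R : Type*} [CommRing R] {σR : R →+* R} {φ : R →+* S}
    (hφ : Function.Semiconj φ σR σ) (v : Fin (p + w) → R) :
    φ ∘ minors σR v = minors σ (φ ∘ v) := by
  funext i
  simp only [Function.comp_apply, minors, map_det_gmat σ hφ, Fin.comp_cons, Function.comp_assoc]

theorem borderedMinors_gmat (x : Fin (p + w) → S) :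
    borderedMinors (gmat σ x) = gmat σ (minors σ x) := by
  ext i j
  rw [borderedMinors, of_apply, det_gmat_submatrix_of_shift σ x _ _ j (fun _ => rfl),
    Fin.comp_cons]
  rfl

theorem det_gmat_minors_mul (x : Fin (p + w) → S) :
    (gmat σ (minors σ x)).det * (σ ^ p) (gmat σ (x ∘ Fin.natAdd p)).det =
      (gmat σ x).det * ∏ j : Fin p, (σ ^ (j + 1 : ℕ)) (gmat σ (x ∘ Fin.natAdd p)).det := by
  rw [← borderedMinors_gmat,
    ← det_gmat_submatrix_of_shift σ x _ (Fin.natAdd p) p (fun _ => rfl),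
    det_borderedMinors_mul_det]
  congr 1
  refine Finset.prod_congr rfl fun j _ => ?_
  exact det_gmat_submatrix_of_shift σ x _ _ _ fun t => by simp [colWindow]; ring

end gmat

namespace MvPolynomial

variable (ι : Type*)

noncomputable def shiftIndex : MvPolynomial (ι × ℕ) ℤ →+* MvPolynomial (ι × ℕ) ℤ :=
  (rename fun q : ι × ℕ => (q.1, q.2 + 1)).toRingHom

theorem shiftIndex_injective : Function.Injective (shiftIndex ι) :=
  rename_injective _ fun a b hab => by simpa [Prod.ext_iff] using hab

theorem shiftIndex_pow_X (k : ℕ) (i : ι) (m : ℕ) :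
    (shiftIndex ι ^ k) (X (i, m)) = X (i, m + k) := by
  rw [RingHom.coe_pow]
  induction k with
  | zero => rfl
  | succ k ih => rw [Function.iterate_succ_apply', ih, shiftIndex]; simp [add_assoc]

variable {ι} {S : Type*} [CommRing S] (σ : S →+* S) (x : ι → S)

noncomputable def twistedEval : MvPolynomial (ι × ℕ) ℤ →+* S :=
  (aeval fun q : ι × ℕ => (σ ^ q.2) (x q.1)).toRingHom

theorem twistedEval_X (i : ι) : twistedEval σ x (X (i, 0)) = x i := by
  simp [twistedEval]

theorem semiconj_twistedEval_shiftIndex :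
    Function.Semiconj (twistedEval σ x) (shiftIndex ι) σ := by
  have h : (twistedEval σ x).comp (shiftIndex ι) = σ.comp (twistedEval σ x) :=
    ringHom_ext (fun c => by simp [shiftIndex, twistedEval]) fun q => by
      simp [shiftIndex, twistedEval, Function.iterate_succ_apply']
  exact RingHom.congr_fun h

end MvPolynomial

open MvPolynomial

theorem det_gmat_shiftIndex_X_ne_zero (p w : ℕ) :
    (gmat (shiftIndex (Fin (p + w))) fun k : Fin w => X (Fin.natAdd p k, 0)).det ≠ 0 := by
  intro h0
  let e : MvPolynomial (Fin (p + w) × ℕ) ℤ →+* ℤ :=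
    eval fun q => if (q.1 : ℕ) = p + q.2 then 1 else 0
  have hI : e.mapMatrix
      (gmat (shiftIndex (Fin (p + w))) fun k : Fin w => X (Fin.natAdd p k, 0)) = 1 := by
    ext a b
    simp [e, gmat, shiftIndex_pow_X, one_apply, Fin.ext_iff]
  simpa [RingHom.map_det, hI] using congrArg e h0

theorem det_gmat_minors_generic {p : ℕ} (hp : 1 ≤ p) (w : ℕ) :
    let σ := shiftIndex (Fin (p + w))
    let x : Fin (p + w) → MvPolynomial (Fin (p + w) × ℕ) ℤ := fun i => X (i, 0)
    (gmat σ (minors σ x)).det =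
      (gmat σ x).det *
        ∏ j ∈ Finset.Icc 1 (p - 1), (σ ^ j) (gmat σ (x ∘ Fin.natAdd p)).det := by
  intro σ x
  have key := det_gmat_minors_mul σ x
  rw [prod_fin_succ_eq_prod_Icc_mul hp (fun j => (σ ^ j) (gmat σ (x ∘ Fin.natAdd p)).det),
    ← mul_assoc] at key
  refine mul_right_cancel₀ ?_ key
  have hinj : Function.Injective (σ ^ p) := by
    rw [RingHom.coe_pow]
    exact (shiftIndex_injective _).iterate p
  exact (map_ne_zero_iff _ hinj).mpr (det_gmat_shiftIndex_X_ne_zero p w)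

theorem det_gmat_minors {S : Type*} [CommRing S] (σ : S →+* S) {p : ℕ} (hp : 1 ≤ p) {w : ℕ}
    (x : Fin (p + w) → S) :
    (gmat σ (minors σ x)).det =
      (gmat σ x).det *
        ∏ j ∈ Finset.Icc 1 (p - 1), (σ ^ j) (gmat σ (x ∘ Fin.natAdd p)).det := by
  have hφ := semiconj_twistedEval_shiftIndex σ x
  have hx : twistedEval σ x ∘ (fun i => X (i, 0)) = x := funext (twistedEval_X σ x)
  have hφ_pow (j : ℕ) (a) :
      twistedEval σ x ((shiftIndex _ ^ j) a) = (σ ^ j) (twistedEval σ x a) := by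
    rw [RingHom.coe_pow, RingHom.coe_pow]
    exact hφ.iterate_right j a
  have := congrArg (twistedEval σ x) (det_gmat_minors_generic hp w)
  simpa only [map_mul, map_prod, hφ_pow, map_det_gmat σ hφ, map_minors σ hφ,
    ← Function.comp_assoc, hx] using this

/-- Turnbull-type determinantal identity (Lemma 5.2 of the paper): with
`m = (m_i)_{i≤i₀}` the vector of minors and `x' = (x_{i₀+1},…,x_n)`, one has
`det g_{i₀}(m) = det g_n(x) · ∏_{j=1}^{i₀−1} σ^j(det g_{n−i₀}(x'))`. -/
theorem det_minor_identity
    (S : Type*) [CommRing S] (σ : S →+* S)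
    (n i₀ : ℕ) (h1 : 1 ≤ i₀) (h : i₀ < n)
    (x : Fin n → S) :
    (gmat σ (minorVec σ i₀ h x)).det =
      (gmat σ x).det *
        ∏ j ∈ Finset.Icc 1 (i₀ - 1),
          (σ ^ j) ((gmat σ (fun k : Fin (n - i₀) =>
            x ⟨i₀ + (k : ℕ), by have := k.2; omega⟩)).det) := by
  obtain ⟨w, rfl⟩ := Nat.exists_eq_add_of_le h.le
  have hd : (gmat σ fun k : Fin (i₀ + w - i₀) => x ⟨i₀ + k, by have := k.2; omega⟩).det =
      (gmat σ (x ∘ Fin.natAdd i₀)).det :=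
    det_gmat_comp_cast σ (Nat.add_sub_cancel_left i₀ w) (x ∘ Fin.natAdd i₀)
  rw [minorVec_eq_minors, det_gmat_minors σ h1, hd]
end

section
/- Let q be a prime power, n ≥ 1, and let T ≅ (𝔽̄_q^×)^n be the diagonal torus of GL_n over 𝔽̄_q, equipped with the twisted Frobenius F(t₁,…,t_n) = (t_n^q, t₁^q, …, t_{n−1}^q). Let δ : ℤ/nℤ → {0,1} be a nonzero function and χ : 𝔾_m → T the cocharacter a ↦ (a^{δ(1)},…,a^{δ(n)}). Let S_χ = {t ∈ T : t^{−1}F(t) ∈ im(χ)}. If 1 ≤ j < i ≤ n and δ does not factor through ℤ/nℤ → ℤ/gcd(n,i−j)ℤ, then S_χ ∩ ker(α_{i,j}) is finite, where α_{i,j} : T → 𝔾_m is the character (t₁,…,t_n) ↦ t_i t_j^{−1}. In particular the identity component of S_χ (which is one-dimensional) is not contained in ker(α_{i,j}). -/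
/-!
Iterating `t (k - 1) ^ q = t k * a ^ δ k` once around the cycle `ℤ/n` gives
`t k ^ (q ^ n - 1) = a ^ N k`, where `N k = ∑_{s < n} q ^ s * δ (k - s)` is the number with
`q`-adic digits `δ k, δ (k - 1), …`. If `t i = t j` then `a ^ N i = a ^ N j`, while
`N i ≠ N j` since otherwise the digit strings agree and `δ` is `(i - j)`-periodic; so `a`, and
with it every `t k`, is a root of unity of bounded order. Conversely, for every `a` a solution
`t` is obtained by choosing a root `t 0` of `x ^ (q ^ n - 1) = a ^ N 0` and propagating along
the cycle, so `S_χ` maps onto `Fˣ` whenever some `δ k ≠ 0`.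
-/

open Function

section normExp

variable {n : ℕ} (q : ℕ) (δ : ZMod n → ℕ)

/-- The exponent of `a` in the `k`-th coordinate of `χ(a) · F(χ(a)) ⋯ F^{r-1}(χ(a))`. -/
def normExp (r : ℕ) (k : ZMod n) : ℕ :=
  Nat.ofDigits q (List.ofFn fun s : Fin r => δ (k - s))

@[simp]
theorem normExp_zero (k : ZMod n) : normExp q δ 0 k = 0 := rfl

theorem normExp_succ (r : ℕ) (k : ZMod n) :
    normExp q δ (r + 1) k = δ k + q * normExp q δ r (k - 1) := by
  simp only [normExp, List.ofFn_succ, Fin.val_zero, Nat.cast_zero, sub_zero, Nat.ofDigits_cons,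
    Fin.val_succ, Nat.cast_succ, sub_add_eq_sub_sub_swap]

variable {q δ}

theorem periodic_of_normExp_eq [NeZero n] (hq : 1 < q) (hδ : ∀ k, δ k < q) {i j : ZMod n}
    (h : normExp q δ n i = normExp q δ n j) : Periodic δ (i - j) := by
  have hdigits := List.ofFn_injective <| Nat.ofDigits_inj_of_len_eq hq (by simp)
    (by simp [List.mem_ofFn, hδ]) (by simp [List.mem_ofFn, hδ]) h
  intro k
  have hk := congrFun hdigits ⟨(j - k).val, ZMod.val_lt _⟩
  simp only [ZMod.natCast_val, ZMod.cast_id', id, sub_sub_cancel] at hk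
  rwa [sub_sub_eq_add_sub, add_sub_right_comm, add_comm] at hk

end normExp

section LangMap

variable {n : ℕ} {G : Type*} [CommGroup G] (q : ℕ) (δ : ZMod n → ℕ)

/-- `t⁻¹ F(t) = χ(a)` for the twisted Frobenius `F(t) k = t (k - 1) ^ q` and the cocharacter
`χ(a) k = a ^ δ k`. -/
def LangMapEq (t : ZMod n → G) (a : G) : Prop :=
  ∀ k, (t k)⁻¹ * t (k - 1) ^ q = a ^ δ k

def langParam (b a : G) (k : ZMod n) : G :=
  b ^ q ^ k.val * (a ^ normExp q δ k.val k)⁻¹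

variable {q δ}

theorem LangMapEq.mul_pow_normExp {t : ZMod n → G} {a : G} (h : LangMapEq q δ t a) (r : ℕ)
    (k : ZMod n) : t k * a ^ normExp q δ r k = t (k - r) ^ q ^ r := by
  induction r generalizing k with
  | zero => simp
  | succ r ih =>
    have hstep : t k * a ^ δ k = t (k - 1) ^ q := by rw [← h k, mul_inv_cancel_left]
    rw [normExp_succ, pow_add, ← mul_assoc, hstep, pow_mul', ← mul_pow, ih, ← pow_mul,
      ← pow_succ, Nat.cast_succ, sub_add_eq_sub_sub_swap]

theorem LangMapEq.pow_pow_sub_one {t : ZMod n → G} {a : G} (h : LangMapEq q δ t a)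
    (hq : q ≠ 0) (k : ZMod n) : t k ^ (q ^ n - 1) = a ^ normExp q δ n k := by
  have hcycle := h.mul_pow_normExp n k
  rw [ZMod.natCast_self, sub_zero, ← Nat.sub_add_cancel (Nat.one_le_pow _ _ hq.bot_lt),
    pow_succ'] at hcycle
  exact (mul_left_cancel hcycle).symm

theorem langParam_natCast {b a : G} (hb : b ^ q ^ n = b * a ^ normExp q δ n 0) {r : ℕ}
    (hr : r ≤ n) : langParam q δ b a r = b ^ q ^ r * (a ^ normExp q δ r r)⁻¹ := by
  rcases hr.lt_or_eq with hr | rfl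
  · rw [langParam, ZMod.val_cast_of_lt hr]
  · simp [langParam, hb]

theorem langMapEq_langParam [NeZero n] {b a : G} (hb : b ^ q ^ n = b * a ^ normExp q δ n 0) :
    LangMapEq q δ (langParam q δ b a) a := by
  intro k
  obtain ⟨m, hm, rfl⟩ : ∃ m < n, ((m + 1 : ℕ) : ZMod n) = k :=
    ⟨(k - 1).val, ZMod.val_lt _, by simp⟩
  have hpred : ((m + 1 : ℕ) : ZMod n) - 1 = m := by push_cast; ring
  rw [hpred, langParam_natCast hb hm, langParam_natCast hb hm.le, normExp_succ, hpred, mul_pow,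
    inv_pow, ← pow_mul, ← pow_succ, ← pow_mul', pow_add, mul_inv_rev, inv_inv, mul_assoc,
    inv_mul_cancel_left, mul_inv_cancel_right]

end LangMap

theorem IsAlgClosed.exists_units_pow_eq {F : Type*} [Field F] [IsAlgClosed F] (c : Fˣ) {m : ℕ}
    (hm : m ≠ 0) : ∃ a : Fˣ, a ^ m = c := by
  obtain ⟨z, hz⟩ := IsAlgClosed.exists_pow_nat_eq (c : F) hm.bot_lt
  have hz0 : z ≠ 0 := by rintro rfl; exact c.ne_zero (by rw [← hz, zero_pow hm])
  exact ⟨Units.mk0 z hz0, Units.ext (by simpa using hz)⟩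

section Field

variable {F : Type*} [Field F] {n : ℕ} [NeZero n] {q : ℕ} {δ : ZMod n → ℕ}

theorem infinite_setOf_langMapEq [IsAlgClosed F] (hq : 1 < q) {k : ZMod n} (hk : δ k ≠ 0) :
    {t : ZMod n → Fˣ | ∃ a, LangMapEq q δ t a}.Infinite := by
  have : Infinite {x : F // x ≠ 0} := (Set.finite_singleton (0 : F)).infinite_compl.to_subtype
  have : Infinite Fˣ := unitsEquivNeZero.infinite_iff.mpr this
  refine Set.Infinite.of_image (fun t => (t k)⁻¹ * t (k - 1) ^ q) ?_
  refine Set.infinite_univ.mono fun c _ => ?_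
  obtain ⟨a, rfl⟩ := IsAlgClosed.exists_units_pow_eq c hk
  have hqn : q ^ n - 1 ≠ 0 := Nat.sub_ne_zero_of_lt (Nat.one_lt_pow (NeZero.ne n) hq)
  obtain ⟨b, hb⟩ := IsAlgClosed.exists_units_pow_eq (a ^ normExp q δ n 0) hqn
  have hb' : b ^ q ^ n = b * a ^ normExp q δ n 0 := by
    rw [← hb, ← pow_succ', Nat.sub_add_cancel (Nat.one_le_pow _ _ (by omega))]
  exact ⟨langParam q δ b a, ⟨a, langMapEq_langParam hb'⟩, langMapEq_langParam hb' k⟩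

theorem finite_setOf_langMapEq_of_normExp_ne (hq : 1 < q) {i j : ZMod n}
    (hij : normExp q δ n i ≠ normExp q δ n j) :
    {t : ZMod n → Fˣ | (∃ a, LangMapEq q δ t a) ∧ t i = t j}.Finite := by
  set M := ((normExp q δ n i : ℤ) - normExp q δ n j).natAbs
  have hqn : q ^ n - 1 ≠ 0 := Nat.sub_ne_zero_of_lt (Nat.one_lt_pow (NeZero.ne n) hq)
  have : NeZero ((q ^ n - 1) * M) := ⟨mul_ne_zero hqn (by omega)⟩
  have hroots : (rootsOfUnity ((q ^ n - 1) * M) F : Set Fˣ).Finite :=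
    Set.finite_coe_iff.mp (inferInstanceAs (Finite (rootsOfUnity _ F)))
  refine (Set.Finite.pi' fun _ => hroots).subset ?_
  rintro t ⟨⟨a, ha⟩, htij⟩ k
  have hpow := ha.pow_pow_sub_one (by omega)
  have haM : a ^ M = 1 := by
    have hD : a ^ normExp q δ n i = a ^ normExp q δ n j := by rw [← hpow, ← hpow, htij]
    exact pow_natAbs_eq_one.mpr (by rw [zpow_sub, zpow_natCast, zpow_natCast, hD, mul_inv_cancel])
  rw [SetLike.mem_coe, mem_rootsOfUnity, pow_mul, hpow, ← pow_mul, mul_comm, pow_mul, haM,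
    one_pow]

end Field

theorem Schi_inter_ker_alpha_finite_general
    (p : ℕ) [Fact p.Prime] (F : Type*) [Field F] [IsAlgClosed F]
    (e q : ℕ) (he : 0 < e) (hq : q = p ^ e)
    (n : ℕ) [NeZero n]
    (δ : ZMod n → ℕ) (hδle : ∀ a, δ a ≤ 1) (hδne : ∃ a, δ a ≠ 0)
    (i j : ZMod n)
    (hfac : ¬ ∀ k : ZMod n, δ (k + (i - j)) = δ k) :
    {t : ZMod n → Fˣ | ∃ a : Fˣ, ∀ k : ZMod n,
        (t k)⁻¹ * (t (k - 1)) ^ q = a ^ δ k}.Infinite ∧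
    {t : ZMod n → Fˣ | (∃ a : Fˣ, ∀ k : ZMod n,
        (t k)⁻¹ * (t (k - 1)) ^ q = a ^ δ k) ∧ t i = t j}.Finite ∧
    ∃ t : ZMod n → Fˣ, (∃ a : Fˣ, ∀ k : ZMod n,
        (t k)⁻¹ * (t (k - 1)) ^ q = a ^ δ k) ∧ t i ≠ t j := by
  have hq1 : 1 < q := hq ▸ Nat.one_lt_pow he.ne' (Fact.out : p.Prime).one_lt
  obtain ⟨k, hk⟩ := hδne
  have hinf := infinite_setOf_langMapEq (F := F) hq1 hk
  have hfin := finite_setOf_langMapEq_of_normExp_ne (F := F) hq1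
    fun h => hfac (periodic_of_normExp_eq hq1 (fun k => (hδle k).trans_lt hq1) h)
  obtain ⟨t, ht, hne⟩ := (hinf.sdiff hfin).nonempty
  exact ⟨hinf, hfin, t, ht, fun hij => hne ⟨ht, hij⟩⟩

/-- Lemma 3.4 of the paper.  Let `F` be an algebraically closed field of
characteristic `p`, `q = p^e > 1`, and let `T = (Fˣ)^{ℤ/n}` be the diagonal torus
of `GL_n` with the twisted Frobenius `Fr(t)_k = t_{k-1}^q` (cyclic indexing).
Let `δ : ℤ/n → {0,1}` be nonzero, `χ(a)_k = a^{δ(k)}` the associated cocharacter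
and `S_χ = {t : t⁻¹ Fr(t) ∈ im χ}`.  If `δ` is not periodic of period `i − j`
(i.e. does not factor through `ℤ/n → ℤ/gcd(n, i−j)`), then `S_χ ∩ ker α_{i,j}` is
finite, where `α_{i,j}(t) = t_i t_j^{-1}`; since `S_χ` is infinite
(one-dimensional), `S_χ` is not contained in `ker α_{i,j}`. -/
theorem Schi_inter_ker_alpha_finite
    (p : ℕ) [Fact p.Prime] (F : Type*) [Field F] [IsAlgClosed F] [CharP F p]
    (e q : ℕ) (he : 0 < e) (hq : q = p ^ e)
    (n : ℕ) [NeZero n]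
    (δ : ZMod n → ℕ) (hδle : ∀ a, δ a ≤ 1) (hδne : ∃ a, δ a ≠ 0)
    (i j : ZMod n) (hij : i ≠ j)
    (hfac : ¬ ∀ k : ZMod n, δ (k + (i - j)) = δ k) :
    {t : ZMod n → Fˣ | ∃ a : Fˣ, ∀ k : ZMod n,
        (t k)⁻¹ * (t (k - 1)) ^ q = a ^ δ k}.Infinite ∧
    {t : ZMod n → Fˣ | (∃ a : Fˣ, ∀ k : ZMod n,
        (t k)⁻¹ * (t (k - 1)) ^ q = a ^ δ k) ∧ t i = t j}.Finite ∧
    ∃ t : ZMod n → Fˣ, (∃ a : Fˣ, ∀ k : ZMod n,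
        (t k)⁻¹ * (t (k - 1)) ^ q = a ^ δ k) ∧ t i ≠ t j :=
  Schi_inter_ker_alpha_finite_general p F e q he hq n δ hδle hδne i j hfac
end

section
/- Let w ∈ S_n be a permutation (viewed as a bijection of ℤ/nℤ) with w ≠ 1, and suppose there is no i with 2 ≤ i ≤ n such that [w(i)] > [w(i−1)+1] > 1, where [a] is the representative of a mod n in {1,…,n}. Then there exist s ≥ 1 and integers 0 = i₀ < i₁ < ⋯ < i_{s−1} < i_s = n with i₁ < n such that for each 1 ≤ j ≤ s and each i_{j−1}+1 ≤ i ≤ i_j one has w(i) = n − i_{j−1} − (i_j − i). -/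
/-! Read `w` as a function `f` on `ℕ`. Suppose `f` maps the positions `[a, b)` bijectively onto
`[0, b - a)`, and let `q` be the position of the top value `b - a - 1`. Walking left from `q`,
each `f r` is not the top value, so the pattern hypothesis gives `f (r + 1) ≤ f r + 1`; by
injectivity `f` must then drop by exactly one at each step, so `[a, q]` is mapped increasingly
onto the top `q - a + 1` values. The positions `[q + 1, b)` then map onto `[0, b - q - 1)` and
we recurse. -/

open Set

/-- `f` maps the block `[I j, I (j + 1))` increasingly onto `[b - I (j + 1), b - I j)`. -/
structure IsBlockReversal (f : ℕ → ℕ) (a b s : ℕ) (I : ℕ → ℕ) : Prop where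
  zero : I 0 = a
  last : I s = b
  lt_succ : ∀ j < s, I j < I (j + 1)
  block : ∀ j < s, ∀ i ∈ Ico (I j) (I (j + 1)), f i + I j + I (j + 1) = b + i

namespace IsBlockReversal

variable {f : ℕ → ℕ} {a b c s : ℕ} {I : ℕ → ℕ}

theorem refl (f : ℕ → ℕ) (a : ℕ) : IsBlockReversal f a a 0 fun _ ↦ a :=
  ⟨rfl, rfl, by simp, by simp⟩

theorem cons (h : IsBlockReversal f c b s I) (hac : a < c)
    (hblock : ∀ i ∈ Ico a c, f i + a + c = b + i) :
    IsBlockReversal f a b (s + 1) (Stream'.cons a I) where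
  zero := rfl
  last := h.last
  lt_succ
    | 0, _ => show a < I 0 from h.zero ▸ hac
    | j + 1, hj => h.lt_succ j (by omega)
  block
    | 0, _ => show ∀ i ∈ Ico a (I 0), f i + a + I 0 = b + i from h.zero ▸ hblock
    | j + 1, hj => h.block j (by omega)

theorem strictMonoOn (h : IsBlockReversal f a b s I) : StrictMonoOn I (Iic s) :=
  strictMonoOn_Iic_of_lt_succ fun j hj ↦ by simpa using h.lt_succ j hj

end IsBlockReversal

theorem add_sub_eq_of_injOn_of_le_add_one {f : ℕ → ℕ} {a q c : ℕ} (hinj : InjOn f (Icc a q))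
    (hle : ∀ i ∈ Icc a q, f i ≤ c) (hq : f q = c)
    (hstep : ∀ r, a ≤ r → r < q → f (r + 1) ≤ f r + 1) :
    ∀ i ∈ Icc a q, f i + (q - i) = c := by
  suffices ∀ t ≤ q - a, f (q - t) + t = c by
    intro i hi
    have := this (q - i) (by simp at hi; omega)
    rwa [Nat.sub_sub_self (by simp at hi; omega)] at this
  intro t
  induction t using Nat.strong_induction_on with
  | _ t ih =>
    intro ht
    rcases t with _ | t
    · simpa using hq
    have hsucc := ih t (by omega) (by omega)
    have hstep' := hstep (q - (t + 1)) (by omega) (by omega)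
    rw [show q - (t + 1) + 1 = q - t by omega] at hstep'
    have hr := hle (q - (t + 1)) (by simp; omega)
    by_contra hne
    -- otherwise `f` takes the value `f (q - (t + 1))` again at `q - t'` with `t' ≤ t`
    have hrep := ih (c - f (q - (t + 1))) (by omega) (by omega)
    have := hinj (by simp; omega) (by simp; omega)
      (show f (q - (t + 1)) = f (q - (c - f (q - (t + 1)))) by omega)
    omega

theorem bijOn_Ico_succ_of_add_sub_eq {f : ℕ → ℕ} {a b q : ℕ}
    (hf : BijOn f (Ico a b) (Iio (b - a))) (haq : a ≤ q) (hqb : q < b)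
    (hrun : ∀ i ∈ Icc a q, f i + (q - i) = b - a - 1) :
    BijOn f (Ico (q + 1) b) (Iio (b - (q + 1))) := by
  refine ⟨fun i hi ↦ ?_, hf.injOn.mono (Ico_subset_Ico_left (by omega)), fun v hv ↦ ?_⟩
  · simp only [mem_Ico, mem_Iio] at hi ⊢
    have hfi : f i < b - a := hf.mapsTo (by simp; omega)
    by_contra hge
    have hj := hrun (q - (b - a - 1 - f i)) (by simp; omega)
    have := hf.injOn (by simp; omega) (by simp; omega)
      (show f i = f (q - (b - a - 1 - f i)) by omega)
    omega
  · obtain ⟨i, hi, rfl⟩ := hf.surjOn (show v < b - a by simp at hv ⊢; omega)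
    refine ⟨i, ?_, rfl⟩
    simp only [mem_Ico, mem_Iio] at hi hv ⊢
    by_contra hiq
    have := hrun i (by simp; omega)
    omega

theorem exists_isBlockReversal {f : ℕ → ℕ} {b : ℕ}
    (hstep : ∀ r, r + 1 < b → f r + 1 < b → f (r + 1) ≤ f r + 1) {a : ℕ} (hab : a ≤ b)
    (hf : BijOn f (Ico a b) (Iio (b - a))) : ∃ s I, IsBlockReversal f a b s I := by
  induction hm : b - a using Nat.strong_induction_on generalizing a with
  | _ m ih =>
    rcases hab.eq_or_lt with rfl | hab
    · exact ⟨0, _, .refl f a⟩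
    obtain ⟨q, hq, hfq⟩ := hf.surjOn (show b - a - 1 < b - a by omega)
    simp only [mem_Ico] at hq
    have hrun : ∀ i ∈ Icc a q, f i + (q - i) = b - a - 1 := by
      refine add_sub_eq_of_injOn_of_le_add_one (hf.injOn.mono (Icc_subset_Ico_right (by omega)))
        (fun i hi ↦ ?_) hfq fun r har hrq ↦ hstep r (by omega) ?_
      · have : f i < b - a := hf.mapsTo (by simp at hi ⊢; omega)
        omega
      · have hr : f r < b - a := hf.mapsTo (by simp; omega)
        have : f r ≠ f q := fun h ↦ by
          have := hf.injOn (by simp; omega) (by simp; omega) h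
          omega
        omega
    obtain ⟨s, I, hI⟩ := ih (b - (q + 1)) (by omega) (by omega)
      (bijOn_Ico_succ_of_add_sub_eq hf hq.1 hq.2 hrun) rfl
    exact ⟨s + 1, _, hI.cons (by omega) fun i hi ↦ by
      rw [mem_Ico] at hi
      have := hrun i ⟨hi.1, by omega⟩
      omega⟩

section

open Fin.NatCast

theorem Equiv.Perm.exists_isBlockReversal {n : ℕ} [NeZero n] (w : Equiv.Perm (Fin n))
    (hstep : ∀ i ipred : Fin n, (ipred : ℕ) + 1 = i → (w ipred : ℕ) + 1 < n →
      (w i : ℕ) ≤ w ipred + 1) :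
    ∃ s I, IsBlockReversal (fun i : ℕ ↦ (w i : ℕ)) 0 n s I := by
  refine _root_.exists_isBlockReversal (fun r hr ↦ hstep _ _ ?_) (Nat.zero_le n) ⟨?_, ?_, ?_⟩
  · rw [Fin.val_cast_of_lt hr, Fin.val_cast_of_lt (by omega)]
  · exact fun i _ ↦ by simp
  · intro i hi j hj hij
    simp only [mem_Ico] at hi hj
    simpa [Fin.val_cast_of_lt hi.2, Fin.val_cast_of_lt hj.2] using
      congrArg Fin.val (w.injective (Fin.ext hij))
  · exact fun v hv ↦ ⟨w.symm ⟨v, by simpa using hv⟩, by simp, by simp⟩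

end

/-- Structure of permutations avoiding the pattern `[w(i)] > [w(i−1)+1] > 1`.
We index positions by `Fin n` (position `i ∈ {0,…,n−1}` corresponds to the paper's
`i+1 ∈ {1,…,n}`, and values are likewise shifted by one); the cyclic bracket
`[a]` is computed via the cyclic addition of `Fin n`.  If `w ≠ 1` and there is no
pair of consecutive positions `ipred, i` (with `(ipred:ℕ)+1 = (i:ℕ)`) such that
`(w ipred + 1 : Fin n)` is nonzero and strictly below `w i`, then `w` decomposes
into blocks: there are `s ≥ 1` and `0 = I 0 < I 1 < ⋯ < I s = n` with `I 1 < n`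
such that on each block `I(j−1) ≤ i < I j` one has
`w(i) = n − 1 − I(j−1) − (I j − 1 − i)`, i.e. `(w i : ℕ) + I (j−1) + I j = n + i`. -/
theorem coxeter_pattern_block_structure
    (n : ℕ) [NeZero n] (w : Equiv.Perm (Fin n)) (hw : w ≠ 1)
    (hpat : ∀ i ipred : Fin n, (ipred : ℕ) + 1 = (i : ℕ) →
      ¬ (((w ipred + 1 : Fin n) : ℕ) < ((w i : ℕ)) ∧ 0 < ((w ipred + 1 : Fin n) : ℕ))) :
    ∃ s : ℕ, 1 ≤ s ∧ ∃ I : ℕ → ℕ,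
      I 0 = 0 ∧ I s = n ∧ (∀ j k : ℕ, j < k → k ≤ s → I j < I k) ∧ I 1 < n ∧
      ∀ j : ℕ, 1 ≤ j → j ≤ s → ∀ i : Fin n,
        I (j - 1) ≤ (i : ℕ) → (i : ℕ) < I j →
          ((w i : ℕ)) + I (j - 1) + I j = n + (i : ℕ) := by
  obtain ⟨s, I, hI⟩ := w.exists_isBlockReversal fun i ipred hi hlt ↦ by
    have := hpat i ipred hi
    rw [Fin.val_add_one_of_lt' hlt] at this
    omega
  have hs : 1 ≤ s := Nat.one_le_iff_ne_zero.2 fun h ↦ NeZero.ne n (hI.last ▸ h ▸ hI.zero)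
  have hmono : ∀ j k, j < k → k ≤ s → I j < I k := fun j k hjk hk ↦
    hI.strictMonoOn (show j ≤ s by omega) hk hjk
  have hblock : ∀ j < s, ∀ i : Fin n, I j ≤ i → i < I (j + 1) →
      (w i : ℕ) + I j + I (j + 1) = n + i :=
    fun j hj i hi1 hi2 ↦ by simpa using hI.block j hj i ⟨hi1, hi2⟩
  refine ⟨s, hs, I, hI.zero, hI.last, hmono, ?_, fun j hj1 hjs i ↦ ?_⟩
  · rcases hs.eq_or_lt with rfl | hs
    · refine absurd (Equiv.ext fun i ↦ Fin.ext ?_) hw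
      have := hblock 0 one_pos i (by simp [hI.zero]) (by simp [hI.last])
      simp only [hI.zero, zero_add, hI.last] at this
      rw [Equiv.Perm.coe_one, id_eq]
      omega
    · exact hI.last ▸ hmono 1 s hs le_rfl
  · obtain ⟨j, rfl⟩ := Nat.exists_eq_add_of_le' hj1
    exact hblock j hjs i
end

section
/- Let R be a perfect ring of characteristic p and let x, y : Spec R → X be two morphisms to a separated scheme X that agree after composition with Spec K_p → Spec R for every point p of Spec R and some choice of algebraically closed field K_p with image p. Then x = y. -/
/-!
Frobenius is injective on a perfect ring, so `R` is reduced. The equalizer of `x` and `y` is a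
closed subscheme of `Spec R` (as `X` is separated) through which every field point, hence every
point, factors; so it is surjective, in particular dominant, and two morphisms out of a reduced
scheme to a separated one that agree on a dominant subscheme are equal.
-/

open AlgebraicGeometry CategoryTheory Limits

lemma isReduced_of_injective_pow {M : Type*} [MonoidWithZero M] {n : ℕ} (hn : 1 < n)
    (hinj : Function.Injective (fun a : M => a ^ n)) : IsReduced M := by
  have eq_zero_of_pow_eq_zero (b : M) (hb : b ^ n = 0) : b = 0 :=
    hinj (hb.trans (zero_pow (by omega)).symm)
  have eq_zero_of_pow_pow_eq_zero (k : ℕ) : ∀ b : M, b ^ n ^ k = 0 → b = 0 := by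
    induction k with
    | zero => simp
    | succ k ih =>
      intro b hb
      exact ih b (eq_zero_of_pow_eq_zero _ (by rwa [← pow_mul, ← pow_succ]))
  exact ⟨fun a ⟨k, hk⟩ => eq_zero_of_pow_pow_eq_zero k a
    (pow_eq_zero_of_le (Nat.lt_pow_self hn).le hk)⟩

namespace AlgebraicGeometry.Scheme

lemma surjective_equalizer_ι {X Y : Scheme} {x y : X ⟶ Y}
    (h : ∀ pt : X, ∃ (T : Scheme) (f : T ⟶ X), pt ∈ Set.range f.base ∧ f ≫ x = f ≫ y) :
    Surjective (equalizer.ι x y) := by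
  refine ⟨fun pt => ?_⟩
  obtain ⟨T, f, ⟨z, rfl⟩, hf⟩ := h pt
  exact ⟨(equalizer.lift f hf).base z, by rw [← Hom.comp_apply, equalizer.lift_ι]⟩

lemma ext_of_forall_exists_range {X Y : Scheme} [IsReduced X] [Y.IsSeparated] {x y : X ⟶ Y}
    (h : ∀ pt : X, ∃ (T : Scheme) (f : T ⟶ X), pt ∈ Set.range f.base ∧ f ≫ x = f ≫ y) :
    x = y :=
  have := surjective_equalizer_ι h
  ext_of_isDominant (equalizer.ι x y) (equalizer.condition x y)

end AlgebraicGeometry.Scheme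

theorem morphisms_eq_of_eq_on_field_points_general
    (p : ℕ) [Fact p.Prime] (R : Type) [CommRing R]
    (hperf : Function.Bijective (fun a : R => a ^ p))
    (X : Scheme) [X.IsSeparated]
    (x y : Spec (CommRingCat.of R) ⟶ X)
    (hpts : ∀ pt : ↥(Spec (CommRingCat.of R)),
      ∃ (K : Type) (_ : Field K) (_ : IsAlgClosed K)
        (f : Spec (CommRingCat.of K) ⟶ Spec (CommRingCat.of R)),
        (∀ z, f.base z = pt) ∧ f ≫ x = f ≫ y) :
    x = y := by
  have : IsReduced R := isReduced_of_injective_pow (Fact.out : p.Prime).one_lt hperf.injective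
  have : IsReduced (CommRingCat.of R) := this
  refine Scheme.ext_of_forall_exists_range fun pt => ?_
  obtain ⟨K, _, _, f, hf, hfxy⟩ := hpts pt
  obtain ⟨z⟩ : Nonempty (PrimeSpectrum K) := inferInstance
  exact ⟨_, f, ⟨z, hf z⟩, hfxy⟩

/-- Let `R` be a perfect ring of characteristic `p` and `x, y : Spec R ⟶ X` two
morphisms to a separated scheme `X`.  If for every point `pt` of `Spec R` there is
an algebraically closed field `K` and a morphism `Spec K ⟶ Spec R` hitting `pt`
after composition with which `x` and `y` agree, then `x = y`. -/
theorem morphisms_eq_of_eq_on_field_points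
    (p : ℕ) [Fact p.Prime] (R : Type) [CommRing R] [CharP R p]
    (hperf : Function.Bijective (fun a : R => a ^ p))
    (X : Scheme) [X.IsSeparated]
    (x y : Spec (CommRingCat.of R) ⟶ X)
    (hpts : ∀ pt : ↥(Spec (CommRingCat.of R)),
      ∃ (K : Type) (_ : Field K) (_ : IsAlgClosed K)
        (f : Spec (CommRingCat.of K) ⟶ Spec (CommRingCat.of R)),
        (∀ z, f.base z = pt) ∧ f ≫ x = f ≫ y) :
    x = y :=
  morphisms_eq_of_eq_on_field_points_general p R hperf X x y hpts
end
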